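/- arXiv:2212.06357 — 4 statements merged into one kernel-verified Lean document; each statement's English description precedes it below -/
import Mathlib

section
/- For every parameter θ and every agent n, the expected discounted local reward E[Σ_{t≥0} γ^t r_n(s_{N(n)}(t), a_{N(n)}(t)) | s(0)=s] under the global policy π_θ depends on the global initial state s only through the neighborhood component s_{N(n)}; denoting this quantity by V_n^{π_θ}(s_{N(n)}), the global value function decomposes exactly as V^{π_θ}(s) = (1/N)·Σ_{n=1}^N V_n^{π_θ}(s_{N(n)}) for every global state s ∈ S. -/
open Finset MeasureTheory
open scoped BigOperators Classical

noncomputable section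

/-- Softmax policy with parameter `θ`. -/
def softmaxPol {S A : Type*} [Fintype A] (θ : S → A → ℝ) (s : S) (a : A) : ℝ :=
  Real.exp (θ s a) / ∑ a' : A, Real.exp (θ s a')

/-- Global product softmax policy. -/
def gPolicy {N : ℕ} {S A : Fin N → Type*} [∀ n, Fintype (A n)]
    (θ : ∀ n, S n → A n → ℝ) (s : ∀ n, S n) (a : ∀ n, A n) : ℝ :=
  ∏ n, softmaxPol (θ n) (s n) (a n)

/-- Global product transition kernel. -/
def gKernel {N : ℕ} {S A : Fin N → Type*} (P : ∀ n, S n → A n → S n → ℝ)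
    (s : ∀ n, S n) (a : ∀ n, A n) (s' : ∀ n, S n) : ℝ :=
  ∏ n, P n (s n) (a n) (s' n)

/-- Distribution of the state at time `t` under kernel `K`, policy `p`,
initial state distribution `ρ`. -/
def stateDist {GS GA : Type*} [Fintype GS] [Fintype GA]
    (K : GS → GA → GS → ℝ) (p : GS → GA → ℝ) (ρ : GS → ℝ) : ℕ → GS → ℝ
  | 0 => ρ
  | t + 1 => fun s' => ∑ s : GS, ∑ a : GA, stateDist K p ρ t s * p s a * K s a s'

/-- Expected reward at time `t`. -/
def expReward {GS GA : Type*} [Fintype GS] [Fintype GA]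
    (K : GS → GA → GS → ℝ) (p : GS → GA → ℝ) (R : GS → GA → ℝ) (ρ : GS → ℝ) (t : ℕ) : ℝ :=
  ∑ s : GS, ∑ a : GA, stateDist K p ρ t s * p s a * R s a

/-- Expected discounted reward with initial state distribution `ρ`:
`V^p(ρ) = E[∑_t γ^t R(s(t),a(t)) | s(0) ∼ ρ]`. -/
def valueD {GS GA : Type*} [Fintype GS] [Fintype GA] (γ : ℝ)
    (K : GS → GA → GS → ℝ) (p : GS → GA → ℝ) (R : GS → GA → ℝ) (ρ : GS → ℝ) : ℝ :=
  ∑' t : ℕ, γ ^ t * expReward K p R ρ t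

/-- Point mass at `s0`. -/
def diracD {GS : Type*} (s0 : GS) : GS → ℝ := fun s => if s = s0 then 1 else 0

/-- State value function `V^p(s)`. -/
def valueV {GS GA : Type*} [Fintype GS] [Fintype GA] (γ : ℝ)
    (K : GS → GA → GS → ℝ) (p : GS → GA → ℝ) (R : GS → GA → ℝ) (s0 : GS) : ℝ :=
  valueD γ K p R (diracD s0)

/-- State-action value function `Q^p(s,a) = R(s,a) + γ E_{s' ∼ K(⬝|s,a)}[V^p(s')]`. -/
def valueQ {GS GA : Type*} [Fintype GS] [Fintype GA] (γ : ℝ)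
    (K : GS → GA → GS → ℝ) (p : GS → GA → ℝ) (R : GS → GA → ℝ) (s0 : GS) (a0 : GA) : ℝ :=
  R s0 a0 + γ * ∑ s' : GS, K s0 a0 s' * valueV γ K p R s'

/-- Discounted state occupancy measure `d_ρ^p(s)`. -/
def occup {GS GA : Type*} [Fintype GS] [Fintype GA] (γ : ℝ)
    (K : GS → GA → GS → ℝ) (p : GS → GA → ℝ) (ρ : GS → ℝ) (s : GS) : ℝ :=
  (1 - γ) * ∑' t : ℕ, γ ^ t * stateDist K p ρ t s

/-- Deterministic policy associated with an action-selection map. -/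
def detPol {GS GA : Type*} (f : GS → GA) : GS → GA → ℝ :=
  fun s a => if a = f s then 1 else 0

/-- Squared Euclidean norm of a multi-agent parameter vector. -/
def sqNorm {N : ℕ} {S A : Fin N → Type*} [∀ n, Fintype (S n)] [∀ n, Fintype (A n)]
    (ν : ∀ n, S n → A n → ℝ) : ℝ :=
  ∑ n, ∑ s, ∑ a, (ν n s a) ^ 2

/-- Euclidean norm of a multi-agent parameter vector. -/
def eucNorm {N : ℕ} {S A : Fin N → Type*} [∀ n, Fintype (S n)] [∀ n, Fintype (A n)]
    (ν : ∀ n, S n → A n → ℝ) : ℝ :=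
  Real.sqrt (sqNorm ν)

end

/-! ### Auxiliary lemmas -/

section Aux

lemma softmax_nonneg' {S A : Type*} [Fintype A] (θ : S → A → ℝ) (s : S) (a : A) :
    0 ≤ softmaxPol θ s a :=
  div_nonneg (Real.exp_nonneg _) (Finset.sum_nonneg fun _ _ => Real.exp_nonneg _)

lemma softmax_sum_one' {S A : Type*} [Fintype A] [Nonempty A] (θ : S → A → ℝ) (s : S) :
    ∑ a : A, softmaxPol θ s a = 1 := by
  have hpos : 0 < ∑ a' : A, Real.exp (θ s a') :=
    Finset.sum_pos (fun _ _ => Real.exp_pos _) Finset.univ_nonempty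
  simp only [softmaxPol, ← Finset.sum_div]
  exact div_self hpos.ne'

lemma sum_pi_marg_key {ι : Type*} [Fintype ι] [DecidableEq ι] {T : ι → Type*} [∀ i, Fintype (T i)]
    (p : ι → Prop) (g₀ : ∀ i, T i)
    (v : ∀ i, T i → ℝ) (hv : ∀ i, ¬ p i → ∑ x, v i x = 1)
    (φ : (∀ i, T i) → ℝ)
    (hφ : ∀ g g' : ∀ i, T i, (∀ i, p i → g i = g' i) → φ g = φ g') :
    ∑ g : ∀ i, T i, (∏ i, v i (g i)) * φ g
      = ∑ u : ∀ i : {x // p x}, T i, (∏ i : {x // p x}, v i.1 (u i)) *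
          φ (fun i => if h : p i then u ⟨i, h⟩ else g₀ i) := by
  classical
  set e := Equiv.piEquivPiSubtypeProd p T with he
  rw [← Equiv.sum_comp e.symm (fun g => (∏ i, v i (g i)) * φ g)]
  rw [Fintype.sum_prod_type]
  refine Finset.sum_congr rfl fun u _ => ?_
  have hsymm : ∀ (w : ∀ i : {x // ¬ p x}, T i) (i : ι),
      e.symm (u, w) i = if h : p i then u ⟨i, h⟩ else w ⟨i, h⟩ := fun _ _ => rfl
  have hφeq : ∀ w, φ (e.symm (u, w)) = φ (fun i => if h : p i then u ⟨i, h⟩ else g₀ i) := by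
    intro w
    refine hφ _ _ fun i hi => ?_
    rw [hsymm]
    simp [hi]
  have hprod : ∀ w, (∏ i, v i (e.symm (u, w) i))
      = (∏ i : {x // p x}, v i.1 (u i)) * (∏ i : {x // ¬ p x}, v i.1 (w i)) := by
    intro w
    rw [← Fintype.prod_subtype_mul_prod_subtype p (fun i => v i (e.symm (u, w) i))]
    congr 1
    · exact Finset.prod_congr rfl fun i _ => by rw [hsymm]; simp [i.2]
    · exact Finset.prod_congr rfl fun i _ => by rw [hsymm]; simp [i.2]
  calc ∑ w, (∏ i, v i (e.symm (u, w) i)) * φ (e.symm (u, w))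
      = ∑ w : ∀ i : {x // ¬ p x}, T i,
          ((∏ i : {x // p x}, v i.1 (u i)) * φ (fun i => if h : p i then u ⟨i, h⟩ else g₀ i))
            * (∏ i : {x // ¬ p x}, v i.1 (w i)) := by
        refine Finset.sum_congr rfl fun w _ => ?_
        rw [hprod, hφeq]; ring
    _ = _ := by
        rw [← Finset.mul_sum, ← Fintype.prod_sum]
        have : (∏ i : {x // ¬ p x}, ∑ x, v i.1 x) = 1 :=
          Finset.prod_eq_one fun i _ => hv i.1 i.2
        rw [this, mul_one]

lemma sum_pi_marg {ι : Type*} [Fintype ι] [DecidableEq ι] {T : ι → Type*} [∀ i, Fintype (T i)]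
    (p : ι → Prop)
    (v v' : ∀ i, T i → ℝ) (hvv : ∀ i, p i → v i = v' i)
    (hv : ∀ i, ¬ p i → ∑ x, v i x = 1) (hv' : ∀ i, ¬ p i → ∑ x, v' i x = 1)
    (φ : (∀ i, T i) → ℝ)
    (hφ : ∀ g g' : ∀ i, T i, (∀ i, p i → g i = g' i) → φ g = φ g') :
    ∑ g : ∀ i, T i, (∏ i, v i (g i)) * φ g = ∑ g : ∀ i, T i, (∏ i, v' i (g i)) * φ g := by
  rcases isEmpty_or_nonempty (∀ i, T i) with hE | hNE
  · simp
  · obtain ⟨g₀⟩ := hNE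
    rw [sum_pi_marg_key p g₀ v hv φ hφ, sum_pi_marg_key p g₀ v' hv' φ hφ]
    exact Finset.sum_congr rfl fun u _ => by
      rw [Finset.prod_congr rfl fun i _ => by rw [hvv i.1 i.2]]

variable {GS GA : Type*} [Fintype GS] [Fintype GA]
  (K : GS → GA → GS → ℝ) (p : GS → GA → ℝ) (ρ : GS → ℝ)

lemma stateDist_nonneg' (hK : ∀ s a s', 0 ≤ K s a s') (hp : ∀ s a, 0 ≤ p s a)
    (hρ : ∀ s, 0 ≤ ρ s) : ∀ t s, 0 ≤ stateDist K p ρ t s := by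
  intro t
  induction t with
  | zero => exact hρ
  | succ t ih =>
    intro s'
    exact Finset.sum_nonneg fun s _ => Finset.sum_nonneg fun a _ =>
      mul_nonneg (mul_nonneg (ih s) (hp s a)) (hK s a s')

lemma stateDist_sum_one' (hK : ∀ s a, ∑ s', K s a s' = 1) (hp : ∀ s, ∑ a, p s a = 1)
    (hρ : ∑ s, ρ s = 1) : ∀ t, ∑ s, stateDist K p ρ t s = 1 := by
  intro t
  induction t with
  | zero => exact hρ
  | succ t ih =>
    have : ∑ s' : GS, stateDist K p ρ (t + 1) s'
        = ∑ s : GS, ∑ a : GA, ∑ s' : GS, stateDist K p ρ t s * p s a * K s a s' := by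
      have h1 : ∀ s' : GS, stateDist K p ρ (t + 1) s'
          = ∑ s : GS, ∑ a : GA, stateDist K p ρ t s * p s a * K s a s' := fun _ => rfl
      simp only [h1]
      rw [Finset.sum_comm]
      exact Finset.sum_congr rfl fun s _ => Finset.sum_comm
    rw [this]
    calc ∑ s : GS, ∑ a : GA, ∑ s' : GS, stateDist K p ρ t s * p s a * K s a s'
        = ∑ s : GS, ∑ a : GA, stateDist K p ρ t s * p s a := by
          refine Finset.sum_congr rfl fun s _ => Finset.sum_congr rfl fun a _ => ?_
          rw [← Finset.mul_sum, hK s a, mul_one]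
      _ = ∑ s : GS, stateDist K p ρ t s := by
          refine Finset.sum_congr rfl fun s _ => ?_
          rw [← Finset.mul_sum, hp s, mul_one]
      _ = 1 := ih

lemma expReward_nonneg' (R : GS → GA → ℝ) (t : ℕ)
    (hK : ∀ s a s', 0 ≤ K s a s') (hp : ∀ s a, 0 ≤ p s a)
    (hρ : ∀ s, 0 ≤ ρ s) (hR : ∀ s a, 0 ≤ R s a) :
    0 ≤ expReward K p R ρ t :=
  Finset.sum_nonneg fun s _ => Finset.sum_nonneg fun a _ =>
    mul_nonneg (mul_nonneg (stateDist_nonneg' K p ρ hK hp hρ t s) (hp s a)) (hR s a)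

lemma expReward_le_one' (R : GS → GA → ℝ) (t : ℕ)
    (hK0 : ∀ s a s', 0 ≤ K s a s') (hp0 : ∀ s a, 0 ≤ p s a) (hρ0 : ∀ s, 0 ≤ ρ s)
    (hK1 : ∀ s a, ∑ s', K s a s' = 1) (hp1 : ∀ s, ∑ a, p s a = 1) (hρ1 : ∑ s, ρ s = 1)
    (hR : ∀ s a, R s a ≤ 1) :
    expReward K p R ρ t ≤ 1 := by
  have hd0 := stateDist_nonneg' K p ρ hK0 hp0 hρ0 t
  calc expReward K p R ρ t
      ≤ ∑ s : GS, ∑ a : GA, stateDist K p ρ t s * p s a := by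
        refine Finset.sum_le_sum fun s _ => Finset.sum_le_sum fun a _ => ?_
        calc stateDist K p ρ t s * p s a * R s a
            ≤ stateDist K p ρ t s * p s a * 1 :=
              mul_le_mul_of_nonneg_left (hR s a) (mul_nonneg (hd0 s) (hp0 s a))
          _ = stateDist K p ρ t s * p s a := mul_one _
    _ = ∑ s : GS, stateDist K p ρ t s := by
        refine Finset.sum_congr rfl fun s _ => ?_
        rw [← Finset.mul_sum, hp1 s, mul_one]
    _ = 1 := stateDist_sum_one' K p ρ hK1 hp1 hρ1 t

lemma diracD_sum_one' (s0 : GS) : ∑ s, diracD s0 s = 1 := by simp [diracD]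

lemma diracD_nonneg' (s0 : GS) (s : GS) : 0 ≤ diracD s0 s := by
  unfold diracD; positivity

lemma stateDist_prod {N : ℕ} {S A : Fin N → Type*} [∀ n, Fintype (S n)] [∀ n, Fintype (A n)]
    (P : ∀ n, S n → A n → S n → ℝ) (θ : ∀ n, S n → A n → ℝ) (s : ∀ k, S k) :
    ∀ (t : ℕ) (s' : ∀ k, S k),
    stateDist (gKernel P) (gPolicy θ) (diracD s) t s'
      = ∏ k, stateDist (P k) (softmaxPol (θ k)) (diracD (s k)) t (s' k) := by
  intro t
  induction t with
  | zero =>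
    intro s'
    by_cases h : s' = s
    · subst h; simp [stateDist, diracD]
    · obtain ⟨k, hk⟩ := Function.ne_iff.mp h
      have hz : stateDist (P k) (softmaxPol (θ k)) (diracD (s k)) 0 (s' k) = 0 := by
        simp [stateDist, diracD, hk]
      rw [Finset.prod_eq_zero (Finset.mem_univ k) hz]
      simp [stateDist, diracD, h]
  | succ t ih =>
    intro s'
    have lhs : stateDist (gKernel P) (gPolicy θ) (diracD s) (t + 1) s'
        = ∑ σ : (∀ k, S k), ∑ α : (∀ k, A k),
            stateDist (gKernel P) (gPolicy θ) (diracD s) t σ * gPolicy θ σ α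
              * gKernel P σ α s' := rfl
    have rhs : ∀ k, stateDist (P k) (softmaxPol (θ k)) (diracD (s k)) (t + 1) (s' k)
        = ∑ y : S k, ∑ b : A k, stateDist (P k) (softmaxPol (θ k)) (diracD (s k)) t y
            * softmaxPol (θ k) y b * P k y b (s' k) := fun k => rfl
    rw [lhs]
    calc ∑ σ : (∀ k, S k), ∑ α : (∀ k, A k),
          stateDist (gKernel P) (gPolicy θ) (diracD s) t σ * gPolicy θ σ α * gKernel P σ α s'
        = ∑ σ : (∀ k, S k), ∑ α : (∀ k, A k), ∏ k,
            (stateDist (P k) (softmaxPol (θ k)) (diracD (s k)) t (σ k)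
              * softmaxPol (θ k) (σ k) (α k) * P k (σ k) (α k) (s' k)) := by
          refine Finset.sum_congr rfl fun σ _ => Finset.sum_congr rfl fun α _ => ?_
          rw [ih σ]
          simp [gPolicy, gKernel, Finset.prod_mul_distrib]
      _ = ∑ σ : (∀ k, S k), ∏ k, ∑ b : A k,
            (stateDist (P k) (softmaxPol (θ k)) (diracD (s k)) t (σ k)
              * softmaxPol (θ k) (σ k) b * P k (σ k) b (s' k)) := by
          refine Finset.sum_congr rfl fun σ _ => ?_
          rw [Fintype.prod_sum]
      _ = ∏ k, ∑ y : S k, ∑ b : A k,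
            (stateDist (P k) (softmaxPol (θ k)) (diracD (s k)) t y
              * softmaxPol (θ k) y b * P k y b (s' k)) := by
          rw [Fintype.prod_sum]
      _ = _ := Finset.prod_congr rfl fun k _ => (rhs k).symm

end Aux

/-- Exact decomposition of the global value function: the expected
discounted local reward of agent `n` depends on the global initial state only through
the neighborhood component `s_{N(n)}`, and the global value function is the average of
the local value functions. -/
theorem value_function_decomposition
    {N : ℕ} (hN : 1 ≤ N)
    {S A : Fin N → Type*}
    [∀ n, Fintype (S n)] [∀ n, Nonempty (S n)]
    [∀ n, Fintype (A n)] [∀ n, Nonempty (A n)]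
    (Nbr : Fin N → Finset (Fin N)) (hNbr : ∀ n, n ∈ Nbr n)
    (r : Fin N → (∀ k, S k) → (∀ k, A k) → ℝ)
    (hr0 : ∀ n s a, 0 ≤ r n s a) (hr1 : ∀ n s a, r n s a ≤ 1)
    (hrloc : ∀ n (s s' : ∀ k, S k) (a a' : ∀ k, A k),
      (∀ k ∈ Nbr n, s k = s' k) → (∀ k ∈ Nbr n, a k = a' k) → r n s a = r n s' a')
    (P : ∀ n, S n → A n → S n → ℝ)
    (hP0 : ∀ n sn an s'n, 0 ≤ P n sn an s'n)
    (hP1 : ∀ n sn an, ∑ s'n, P n sn an s'n = 1)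
    (γ : ℝ) (hγ0 : 0 < γ) (hγ1 : γ < 1)
    (θ : ∀ n, S n → A n → ℝ) (n : Fin N) :
    (∀ s s' : ∀ k, S k, (∀ k ∈ Nbr n, s k = s' k) →
      valueV γ (gKernel P) (gPolicy θ) (r n) s = valueV γ (gKernel P) (gPolicy θ) (r n) s') ∧
    (∀ s : ∀ k, S k,
      valueV γ (gKernel P) (gPolicy θ) (fun s' a' => (N : ℝ)⁻¹ * ∑ m, r m s' a') s
        = (N : ℝ)⁻¹ * ∑ m, valueV γ (gKernel P) (gPolicy θ) (r m) s) := by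
  classical
  -- basic facts about the local policies
  have hπ0 : ∀ (k : Fin N) (x : S k) (b : A k), 0 ≤ softmaxPol (θ k) x b :=
    fun k x b => softmax_nonneg' (θ k) x b
  have hπ1 : ∀ (k : Fin N) (x : S k), ∑ b, softmaxPol (θ k) x b = 1 :=
    fun k x => softmax_sum_one' (θ k) x
  -- basic facts about the global policy and kernel
  have hGP0 : ∀ (σ : ∀ k, S k) (α : ∀ k, A k), 0 ≤ gPolicy θ σ α :=
    fun σ α => Finset.prod_nonneg fun k _ => hπ0 k (σ k) (α k)
  have hGP1 : ∀ σ : ∀ k, S k, ∑ α : (∀ k, A k), gPolicy θ σ α = 1 := by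
    intro σ
    unfold gPolicy
    rw [← Fintype.prod_sum]
    exact Finset.prod_eq_one fun k _ => hπ1 k (σ k)
  have hGK0 : ∀ (σ : ∀ k, S k) (α : ∀ k, A k) (σ' : ∀ k, S k), 0 ≤ gKernel P σ α σ' :=
    fun σ α σ' => Finset.prod_nonneg fun k _ => hP0 k (σ k) (α k) (σ' k)
  have hGK1 : ∀ (σ : ∀ k, S k) (α : ∀ k, A k), ∑ σ' : (∀ k, S k), gKernel P σ α σ' = 1 := by
    intro σ α
    unfold gKernel
    rw [← Fintype.prod_sum]
    exact Finset.prod_eq_one fun k _ => hP1 k (σ k) (α k)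
  -- local state distributions are probability distributions
  have hd1 : ∀ (k : Fin N) (x : S k) (t : ℕ),
      ∑ y, stateDist (P k) (softmaxPol (θ k)) (diracD x) t y = 1 :=
    fun k x t => stateDist_sum_one' (P k) (softmaxPol (θ k)) (diracD x)
      (hP1 k) (hπ1 k) (diracD_sum_one' x) t
  -- inner invariance : the policy-averaged local reward depends only on neighborhood coords
  have hinner : ∀ σ σ' : (∀ k, S k), (∀ k ∈ Nbr n, σ k = σ' k) →
      (∑ α : ∀ k, A k, gPolicy θ σ α * r n σ α)
        = ∑ α : ∀ k, A k, gPolicy θ σ' α * r n σ' α := by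
    intro σ σ' hσ
    have hr : ∀ α, r n σ α = r n σ' α := fun α => hrloc n σ σ' α α hσ (fun _ _ => rfl)
    simp only [hr, gPolicy]
    exact sum_pi_marg (fun k => k ∈ Nbr n)
      (fun k b => softmaxPol (θ k) (σ k) b) (fun k b => softmaxPol (θ k) (σ' k) b)
      (fun k hk => congrArg (fun x => fun b => softmaxPol (θ k) x b) (hσ k hk))
      (fun k _ => hπ1 k (σ k)) (fun k _ => hπ1 k (σ' k))
      (fun α => r n σ' α)
      (fun α α' h => hrloc n σ' σ' α α' (fun _ _ => rfl) (fun k hk => h k hk))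
  -- outer invariance : the expected reward at each time depends only on neighborhood coords
  have houter : ∀ (t : ℕ) (s s' : ∀ k, S k), (∀ k ∈ Nbr n, s k = s' k) →
      expReward (gKernel P) (gPolicy θ) (r n) (diracD s) t
        = expReward (gKernel P) (gPolicy θ) (r n) (diracD s') t := by
    intro t s s' hs
    unfold expReward
    simp only [stateDist_prod P θ]
    have reshape : ∀ s0 : ∀ k, S k,
        (∑ σ : (∀ k, S k), ∑ α : (∀ k, A k),
          (∏ k, stateDist (P k) (softmaxPol (θ k)) (diracD (s0 k)) t (σ k))
            * gPolicy θ σ α * r n σ α)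
        = ∑ σ : (∀ k, S k),
            (∏ k, stateDist (P k) (softmaxPol (θ k)) (diracD (s0 k)) t (σ k))
              * (∑ α : (∀ k, A k), gPolicy θ σ α * r n σ α) := by
      intro s0
      refine Finset.sum_congr rfl fun σ _ => ?_
      rw [Finset.mul_sum]
      exact Finset.sum_congr rfl fun α _ => mul_assoc _ _ _
    rw [reshape s, reshape s']
    exact sum_pi_marg (fun k => k ∈ Nbr n)
      (fun k y => stateDist (P k) (softmaxPol (θ k)) (diracD (s k)) t y)
      (fun k y => stateDist (P k) (softmaxPol (θ k)) (diracD (s' k)) t y)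
      (fun k hk => congrArg
        (fun x => fun y => stateDist (P k) (softmaxPol (θ k)) (diracD x) t y) (hs k hk))
      (fun k _ => hd1 k (s k) t) (fun k _ => hd1 k (s' k) t)
      (fun σ => ∑ α : (∀ k, A k), gPolicy θ σ α * r n σ α)
      (fun σ σ' h => hinner σ σ' fun k hk => h k hk)
  constructor
  · -- part 1
    intro s s' hs
    unfold valueV valueD
    exact tsum_congr fun t => by rw [houter t s s' hs]
  · -- part 2
    intro s
    -- bounds on the expected rewards
    have he0 : ∀ (m : Fin N) (t : ℕ),
        0 ≤ expReward (gKernel P) (gPolicy θ) (r m) (diracD s) t :=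
      fun m t => expReward_nonneg' (gKernel P) (gPolicy θ) (diracD s) (r m) t
        hGK0 hGP0 (diracD_nonneg' s) (hr0 m)
    have he1 : ∀ (m : Fin N) (t : ℕ),
        expReward (gKernel P) (gPolicy θ) (r m) (diracD s) t ≤ 1 :=
      fun m t => expReward_le_one' (gKernel P) (gPolicy θ) (diracD s) (r m) t
        hGK0 hGP0 (diracD_nonneg' s) hGK1 hGP1 (diracD_sum_one' s) (hr1 m)
    have hsum : ∀ m : Fin N, Summable
        (fun t : ℕ => γ ^ t * expReward (gKernel P) (gPolicy θ) (r m) (diracD s) t) := by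
      intro m
      refine Summable.of_nonneg_of_le
        (fun t => mul_nonneg (pow_nonneg hγ0.le t) (he0 m t))
        (fun t => ?_) (summable_geometric_of_lt_one hγ0.le hγ1)
      calc γ ^ t * expReward (gKernel P) (gPolicy θ) (r m) (diracD s) t
          ≤ γ ^ t * 1 := mul_le_mul_of_nonneg_left (he1 m t) (pow_nonneg hγ0.le t)
        _ = γ ^ t := mul_one _
    have hlin : ∀ t : ℕ,
        expReward (gKernel P) (gPolicy θ) (fun s' a' => (N : ℝ)⁻¹ * ∑ m, r m s' a')
          (diracD s) t
        = (N : ℝ)⁻¹ * ∑ m, expReward (gKernel P) (gPolicy θ) (r m) (diracD s) t := by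
      intro t
      unfold expReward
      calc ∑ σ : (∀ k, S k), ∑ α : (∀ k, A k),
            stateDist (gKernel P) (gPolicy θ) (diracD s) t σ * gPolicy θ σ α
              * ((N : ℝ)⁻¹ * ∑ m, r m σ α)
          = ∑ σ : (∀ k, S k), ∑ α : (∀ k, A k), ∑ m : Fin N, (N : ℝ)⁻¹ *
              (stateDist (gKernel P) (gPolicy θ) (diracD s) t σ * gPolicy θ σ α * r m σ α) := by
            refine Finset.sum_congr rfl fun σ _ => Finset.sum_congr rfl fun α _ => ?_
            simp only [Finset.mul_sum]
            exact Finset.sum_congr rfl fun m _ => by ring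
        _ = ∑ m : Fin N, ∑ σ : (∀ k, S k), ∑ α : (∀ k, A k), (N : ℝ)⁻¹ *
              (stateDist (gKernel P) (gPolicy θ) (diracD s) t σ * gPolicy θ σ α * r m σ α) := by
            rw [Finset.sum_congr rfl fun σ _ => (Finset.sum_comm :
              (∑ α : (∀ k, A k), ∑ m : Fin N, (N : ℝ)⁻¹ *
                (stateDist (gKernel P) (gPolicy θ) (diracD s) t σ * gPolicy θ σ α * r m σ α))
              = _)]
            exact Finset.sum_comm
        _ = (N : ℝ)⁻¹ * ∑ m : Fin N, ∑ σ : (∀ k, S k), ∑ α : (∀ k, A k),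
              stateDist (gKernel P) (gPolicy θ) (diracD s) t σ * gPolicy θ σ α * r m σ α := by
            rw [Finset.mul_sum]
            refine Finset.sum_congr rfl fun m _ => ?_
            rw [Finset.mul_sum]
            refine Finset.sum_congr rfl fun σ _ => ?_
            rw [Finset.mul_sum]
    unfold valueV valueD
    calc ∑' t : ℕ, γ ^ t * expReward (gKernel P) (gPolicy θ)
          (fun s' a' => (N : ℝ)⁻¹ * ∑ m, r m s' a') (diracD s) t
        = ∑' t : ℕ, ∑ m : Fin N, (N : ℝ)⁻¹ *
            (γ ^ t * expReward (gKernel P) (gPolicy θ) (r m) (diracD s) t) := by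
          refine tsum_congr fun t => ?_
          rw [hlin t, Finset.mul_sum, Finset.mul_sum]
          exact Finset.sum_congr rfl fun m _ => by ring
      _ = ∑ m : Fin N, ∑' t : ℕ, (N : ℝ)⁻¹ *
            (γ ^ t * expReward (gKernel P) (gPolicy θ) (r m) (diracD s) t) :=
          Summable.tsum_finsetSum fun m _ => (hsum m).mul_left _
      _ = ∑ m : Fin N, (N : ℝ)⁻¹ *
            ∑' t : ℕ, γ ^ t * expReward (gKernel P) (gPolicy θ) (r m) (diracD s) t :=
          Finset.sum_congr rfl fun m _ => tsum_mul_left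
      _ = (N : ℝ)⁻¹ * ∑ m : Fin N,
            ∑' t : ℕ, γ ^ t * expReward (gKernel P) (gPolicy θ) (r m) (diracD s) t :=
          (Finset.mul_sum _ _ _).symm
end

section
/- Second-order bound for product softmax probabilities: fix a global state s ∈ S and a direction ν = (ν_1,…,ν_N) with ν_n ∈ ℝ^{S_n×A_n}. Then the second directional derivatives of the product softmax probabilities satisfy Σ_{a∈A} |⟨∇²_θ π_θ(a|s) ν, ν⟩| ≤ 6N²·‖ν‖₂². -/
open Finset MeasureTheory
open scoped BigOperators Classical

noncomputable section SoftmaxAux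

variable {N : ℕ} {S A : Fin N → Type*}
  [∀ n, Fintype (S n)] [∀ n, Fintype (A n)] [∀ n, Nonempty (A n)]

variable (θ ν : ∀ n, S n → A n → ℝ) (s : ∀ k, S k)

/-- Partition function along the line `θ + t • ν`. -/
def Zf (n : Fin N) (t : ℝ) : ℝ := ∑ b, Real.exp (θ n (s n) b + t * ν n (s n) b)

/-- Softmax probability along the line. -/
def pf (n : Fin N) (a : A n) (t : ℝ) : ℝ :=
  Real.exp (θ n (s n) a + t * ν n (s n) a) / Zf θ ν s n t

/-- Mean of `ν` under the softmax distribution. -/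
def qf (n : Fin N) (t : ℝ) : ℝ := ∑ b, pf θ ν s n b t * ν n (s n) b

/-- Second moment of `ν` under the softmax distribution. -/
def rf (n : Fin N) (t : ℝ) : ℝ := ∑ b, pf θ ν s n b t * (ν n (s n) b) ^ 2

/-- First derivative of `pf`. -/
def d1 (n : Fin N) (a : A n) (t : ℝ) : ℝ :=
  pf θ ν s n a t * (ν n (s n) a - qf θ ν s n t)

/-- Second derivative of `pf`. -/
def d2 (n : Fin N) (a : A n) (t : ℝ) : ℝ :=
  pf θ ν s n a t *
    ((ν n (s n) a - qf θ ν s n t) ^ 2 - (rf θ ν s n t - (qf θ ν s n t) ^ 2))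

/-- Per-agent Euclidean norm of the direction. -/
def Cn (n : Fin N) : ℝ := Real.sqrt (∑ x, ∑ b, (ν n x b) ^ 2)

lemma Zf_pos (n : Fin N) (t : ℝ) : 0 < Zf θ ν s n t :=
  Finset.sum_pos (fun b _ => Real.exp_pos _) Finset.univ_nonempty

lemma pf_nonneg (n : Fin N) (a : A n) (t : ℝ) : 0 ≤ pf θ ν s n a t :=
  div_nonneg (Real.exp_pos _).le (Zf_pos θ ν s n t).le

lemma pf_sum (n : Fin N) (t : ℝ) : ∑ a, pf θ ν s n a t = 1 := by
  simp only [pf]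
  rw [← Finset.sum_div]
  exact div_self (Zf_pos θ ν s n t).ne'

lemma hasDerivAt_exp_line (n : Fin N) (b : A n) (t : ℝ) :
    HasDerivAt (fun u => Real.exp (θ n (s n) b + u * ν n (s n) b))
      (Real.exp (θ n (s n) b + t * ν n (s n) b) * ν n (s n) b) t :=
  ((hasDerivAt_mul_const (ν n (s n) b)).const_add (θ n (s n) b)).exp

lemma hasDerivAt_Zf (n : Fin N) (t : ℝ) :
    HasDerivAt (Zf θ ν s n)
      (∑ b, Real.exp (θ n (s n) b + t * ν n (s n) b) * ν n (s n) b) t := by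
  exact HasDerivAt.fun_sum fun b _ => hasDerivAt_exp_line θ ν s n b t

lemma qf_eq (n : Fin N) (t : ℝ) :
    qf θ ν s n t
      = (∑ b, Real.exp (θ n (s n) b + t * ν n (s n) b) * ν n (s n) b) / Zf θ ν s n t := by
  rw [qf, Finset.sum_div]
  refine Finset.sum_congr rfl fun b _ => ?_
  rw [pf, div_mul_eq_mul_div]

lemma hasDerivAt_pf (n : Fin N) (a : A n) (t : ℝ) :
    HasDerivAt (pf θ ν s n a) (d1 θ ν s n a t) t := by
  have h := (hasDerivAt_exp_line θ ν s n a t).div (hasDerivAt_Zf θ ν s n t)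
    (Zf_pos θ ν s n t).ne'
  convert h using 1
  · rfl
  · rfl
  · rfl
  rw [d1, pf, qf_eq]
  have hZ := (Zf_pos θ ν s n t).ne'
  field_simp

lemma hasDerivAt_qf (n : Fin N) (t : ℝ) :
    HasDerivAt (qf θ ν s n) (rf θ ν s n t - (qf θ ν s n t) ^ 2) t := by
  have h : HasDerivAt (qf θ ν s n) (∑ b, d1 θ ν s n b t * ν n (s n) b) t := by
    apply HasDerivAt.fun_sum
    exact fun b _ => (hasDerivAt_pf θ ν s n b t).mul_const (ν n (s n) b)
  convert h using 1
  have : ∀ b, d1 θ ν s n b t * ν n (s n) b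
      = pf θ ν s n b t * (ν n (s n) b) ^ 2 - qf θ ν s n t * (pf θ ν s n b t * ν n (s n) b) := by
    intro b; rw [d1]; ring
  rw [Finset.sum_congr rfl fun b _ => this b, Finset.sum_sub_distrib, ← Finset.mul_sum,
    ← rf, ← qf]
  ring

lemma hasDerivAt_d1 (n : Fin N) (a : A n) (t : ℝ) :
    HasDerivAt (d1 θ ν s n a) (d2 θ ν s n a t) t := by
  have h := (hasDerivAt_pf θ ν s n a t).mul
    ((hasDerivAt_const t (ν n (s n) a)).sub (hasDerivAt_qf θ ν s n t))
  convert h using 1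
  · rfl
  · rfl
  · rfl
  rw [d2, d1]
  simp only [Pi.sub_apply]
  ring

lemma abs_nu_le (n : Fin N) (b : A n) : |ν n (s n) b| ≤ Cn ν n := by
  rw [← Real.sqrt_sq_eq_abs, Cn]
  apply Real.sqrt_le_sqrt
  calc (ν n (s n) b) ^ 2 ≤ ∑ c, (ν n (s n) c) ^ 2 :=
        Finset.single_le_sum (f := fun c => (ν n (s n) c) ^ 2)
          (fun c _ => sq_nonneg _) (Finset.mem_univ b)
    _ ≤ ∑ x, ∑ c, (ν n x c) ^ 2 :=
        Finset.single_le_sum (f := fun x => ∑ c, (ν n x c) ^ 2)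
          (fun x _ => Finset.sum_nonneg fun c _ => sq_nonneg _) (Finset.mem_univ (s n))

lemma Cn_nonneg (n : Fin N) : 0 ≤ Cn ν n := Real.sqrt_nonneg _

lemma abs_qf_le (n : Fin N) (t : ℝ) : |qf θ ν s n t| ≤ Cn ν n := by
  rw [qf]
  calc |∑ b, pf θ ν s n b t * ν n (s n) b| ≤ ∑ b, |pf θ ν s n b t * ν n (s n) b| :=
        Finset.abs_sum_le_sum_abs _ _
    _ ≤ ∑ b, pf θ ν s n b t * Cn ν n := by
        refine Finset.sum_le_sum fun b _ => ?_
        rw [abs_mul, abs_of_nonneg (pf_nonneg θ ν s n b t)]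
        exact mul_le_mul_of_nonneg_left (abs_nu_le ν s n b) (pf_nonneg θ ν s n b t)
    _ = Cn ν n := by rw [← Finset.sum_mul, pf_sum, one_mul]

lemma sum_abs_d1_le (n : Fin N) (t : ℝ) :
    ∑ a, |d1 θ ν s n a t| ≤ 2 * Cn ν n := by
  calc ∑ a, |d1 θ ν s n a t| ≤ ∑ a, pf θ ν s n a t * (2 * Cn ν n) := by
        refine Finset.sum_le_sum fun a _ => ?_
        rw [d1, abs_mul, abs_of_nonneg (pf_nonneg θ ν s n a t)]
        refine mul_le_mul_of_nonneg_left ?_ (pf_nonneg θ ν s n a t)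
        calc |ν n (s n) a - qf θ ν s n t| ≤ |ν n (s n) a| + |qf θ ν s n t| := abs_sub _ _
          _ ≤ Cn ν n + Cn ν n := add_le_add (abs_nu_le ν s n a) (abs_qf_le θ ν s n t)
          _ = 2 * Cn ν n := by ring
    _ = 2 * Cn ν n := by rw [← Finset.sum_mul, pf_sum, one_mul]

lemma var_eq (n : Fin N) (t : ℝ) :
    ∑ a, pf θ ν s n a t * (ν n (s n) a - qf θ ν s n t) ^ 2
      = rf θ ν s n t - (qf θ ν s n t) ^ 2 := by
  have : ∀ a, pf θ ν s n a t * (ν n (s n) a - qf θ ν s n t) ^ 2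
      = pf θ ν s n a t * (ν n (s n) a) ^ 2
        - 2 * qf θ ν s n t * (pf θ ν s n a t * ν n (s n) a)
        + (qf θ ν s n t) ^ 2 * pf θ ν s n a t := by
    intro a; ring
  rw [Finset.sum_congr rfl fun a _ => this a, Finset.sum_add_distrib,
    Finset.sum_sub_distrib, ← Finset.mul_sum, ← Finset.mul_sum, ← rf, ← qf, pf_sum]
  ring

lemma var_nonneg (n : Fin N) (t : ℝ) : 0 ≤ rf θ ν s n t - (qf θ ν s n t) ^ 2 := by
  rw [← var_eq θ ν s n t]
  exact Finset.sum_nonneg fun a _ => mul_nonneg (pf_nonneg θ ν s n a t) (sq_nonneg _)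

lemma rf_le (n : Fin N) (t : ℝ) : rf θ ν s n t ≤ (Cn ν n) ^ 2 := by
  rw [rf]
  calc ∑ b, pf θ ν s n b t * (ν n (s n) b) ^ 2 ≤ ∑ b, pf θ ν s n b t * (Cn ν n) ^ 2 := by
        refine Finset.sum_le_sum fun b _ => ?_
        refine mul_le_mul_of_nonneg_left ?_ (pf_nonneg θ ν s n b t)
        calc (ν n (s n) b) ^ 2 = |ν n (s n) b| ^ 2 := (sq_abs _).symm
          _ ≤ (Cn ν n) ^ 2 := by
              exact pow_le_pow_left₀ (abs_nonneg _) (abs_nu_le ν s n b) 2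
    _ = (Cn ν n) ^ 2 := by rw [← Finset.sum_mul, pf_sum, one_mul]

lemma sum_abs_d2_le (n : Fin N) (t : ℝ) :
    ∑ a, |d2 θ ν s n a t| ≤ 2 * (Cn ν n) ^ 2 := by
  have h1 : ∑ a, |d2 θ ν s n a t|
      ≤ ∑ a, (pf θ ν s n a t * (ν n (s n) a - qf θ ν s n t) ^ 2
          + pf θ ν s n a t * (rf θ ν s n t - (qf θ ν s n t) ^ 2)) := by
    refine Finset.sum_le_sum fun a _ => ?_
    rw [d2, abs_mul, abs_of_nonneg (pf_nonneg θ ν s n a t), ← mul_add]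
    refine mul_le_mul_of_nonneg_left ?_ (pf_nonneg θ ν s n a t)
    calc |(ν n (s n) a - qf θ ν s n t) ^ 2 - (rf θ ν s n t - (qf θ ν s n t) ^ 2)|
        ≤ |(ν n (s n) a - qf θ ν s n t) ^ 2| + |rf θ ν s n t - (qf θ ν s n t) ^ 2| :=
          abs_sub _ _
      _ = (ν n (s n) a - qf θ ν s n t) ^ 2 + (rf θ ν s n t - (qf θ ν s n t) ^ 2) := by
          rw [abs_of_nonneg (sq_nonneg _), abs_of_nonneg (var_nonneg θ ν s n t)]
  have h2 : ∑ a, (pf θ ν s n a t * (ν n (s n) a - qf θ ν s n t) ^ 2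
      + pf θ ν s n a t * (rf θ ν s n t - (qf θ ν s n t) ^ 2))
      = 2 * (rf θ ν s n t - (qf θ ν s n t) ^ 2) := by
    rw [Finset.sum_add_distrib, var_eq, ← Finset.sum_mul, pf_sum, one_mul]
    ring
  refine h1.trans (h2.le.trans ?_)
  have := rf_le θ ν s n t
  have := sq_nonneg (qf θ ν s n t)
  nlinarith

variable (a : ∀ k, A k)

/-- First derivative of the global product along the line. -/
def D1g (t : ℝ) : ℝ :=
  ∑ n, (∏ m ∈ Finset.univ.erase n, pf θ ν s m (a m) t) * d1 θ ν s n (a n) t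

/-- Second derivative of the global product along the line. -/
def D2g (t : ℝ) : ℝ :=
  ∑ n, ((∑ m ∈ Finset.univ.erase n,
        (∏ k ∈ (Finset.univ.erase n).erase m, pf θ ν s k (a k) t) * d1 θ ν s m (a m) t)
          * d1 θ ν s n (a n) t
    + (∏ m ∈ Finset.univ.erase n, pf θ ν s m (a m) t) * d2 θ ν s n (a n) t)

lemma hasDerivAt_gA (t : ℝ) :
    HasDerivAt (fun u => ∏ n, pf θ ν s n (a n) u) (D1g θ ν s a t) t := by
  have h := HasDerivAt.fun_finsetProd (u := Finset.univ)
    (f := fun n u => pf θ ν s n (a n) u)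
    (f' := fun n => d1 θ ν s n (a n) t) (x := t)
    (fun n _ => hasDerivAt_pf θ ν s n (a n) t)
  simpa [D1g, smul_eq_mul] using h

lemma hasDerivAt_D1g (t : ℝ) :
    HasDerivAt (D1g θ ν s a) (D2g θ ν s a t) t := by
  have h : HasDerivAt
      (fun u => ∑ n, (∏ m ∈ Finset.univ.erase n, pf θ ν s m (a m) u) * d1 θ ν s n (a n) u)
      (∑ n, ((∑ m ∈ Finset.univ.erase n,
          (∏ k ∈ (Finset.univ.erase n).erase m, pf θ ν s k (a k) t) • d1 θ ν s m (a m) t)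
            * d1 θ ν s n (a n) t
        + (∏ m ∈ Finset.univ.erase n, pf θ ν s m (a m) t) * d2 θ ν s n (a n) t)) t := by
    refine HasDerivAt.fun_sum fun n _ => ?_
    exact (HasDerivAt.fun_finsetProd
      (fun m _ => hasDerivAt_pf θ ν s m (a m) t)).mul (hasDerivAt_d1 θ ν s n (a n) t)
  have he : D1g θ ν s a
      = fun u => ∑ n, (∏ m ∈ Finset.univ.erase n, pf θ ν s m (a m) u) * d1 θ ν s n (a n) u :=
    rfl
  rw [he, D2g]
  simpa [smul_eq_mul] using h

lemma line_eq :
    (fun t : ℝ => gPolicy (θ + t • ν) s a) = fun t => ∏ n, pf θ ν s n (a n) t := by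
  funext t
  unfold gPolicy softmaxPol pf Zf
  simp [Pi.add_apply, Pi.smul_apply, smul_eq_mul]

lemma contDiff_eval (n : Fin N) (x : S n) (b : A n) :
    ContDiff ℝ 2 (fun θ' : ∀ n, S n → A n → ℝ => θ' n x b) :=
  ((ContinuousLinearMap.proj (R := ℝ) (φ := fun _ : A n => ℝ) b).comp
    ((ContinuousLinearMap.proj (R := ℝ) (φ := fun _ : S n => A n → ℝ) x).comp
      (ContinuousLinearMap.proj (R := ℝ) (φ := fun n : Fin N => S n → A n → ℝ) n))).contDiff

lemma contDiff_F :
    ContDiff ℝ 2 (fun θ' : ∀ n, S n → A n → ℝ => gPolicy θ' s a) := by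
  unfold gPolicy softmaxPol
  have h : ∀ n : Fin N, ContDiff ℝ 2 (fun θ' : ∀ n, S n → A n → ℝ =>
      Real.exp (θ' n (s n) (a n)) / ∑ b, Real.exp (θ' n (s n) b)) := by
    intro n
    refine ContDiff.div ((contDiff_eval n (s n) (a n)).exp)
      (ContDiff.sum fun b _ => (contDiff_eval n (s n) b).exp) ?_
    intro x
    exact (Finset.sum_pos (fun b _ => Real.exp_pos _) Finset.univ_nonempty).ne'
  exact contDiff_prod fun n _ => h n

lemma second_deriv_eq :
    iteratedFDeriv ℝ 2 (fun θ' : ∀ n, S n → A n → ℝ => gPolicy θ' s a) θ ![ν, ν]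
      = D2g θ ν s a 0 := by
  set F := fun θ' : ∀ n, S n → A n → ℝ => gPolicy θ' s a with hFdef
  have hC : ContDiff ℝ 2 F := contDiff_F s a
  have hline : ∀ t : ℝ, HasDerivAt (fun u : ℝ => θ + u • ν) ν t := by
    intro t
    simpa using ((hasDerivAt_id t).smul_const ν).const_add θ
  have hF1 : ∀ t : ℝ, fderiv ℝ F (θ + t • ν) ν = D1g θ ν s a t := by
    intro t
    have h1 : HasDerivAt (fun u => F (θ + u • ν)) (fderiv ℝ F (θ + t • ν) ν) t :=
      ((hC.differentiable (by norm_num) _).hasFDerivAt).comp_hasDerivAt t (hline t)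
    have h2 : HasDerivAt (fun u => F (θ + u • ν)) (D1g θ ν s a t) t := by
      have heq : (fun u => F (θ + u • ν)) = fun u => ∏ n, pf θ ν s n (a n) u :=
        line_eq θ ν s a
      rw [heq]
      exact hasDerivAt_gA θ ν s a t
    exact h1.unique h2
  rw [iteratedFDeriv_two_apply]
  simp only [Matrix.cons_val_zero, Matrix.cons_val_one, Matrix.head_cons]
  set Φ : ((∀ n, S n → A n → ℝ) →L[ℝ] ℝ) →L[ℝ] ℝ := ContinuousLinearMap.apply ℝ ℝ ν
    with hΦ
  have hfd : Differentiable ℝ (fderiv ℝ F) :=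
    (hC.fderiv_right (m := 1) (by norm_num)).differentiable (by norm_num)
  have h0 : θ + (0 : ℝ) • ν = θ := by simp
  have hG : HasDerivAt (fun t : ℝ => Φ (fderiv ℝ F (θ + t • ν)))
      ((Φ.comp (fderiv ℝ (fderiv ℝ F) (θ + (0 : ℝ) • ν))) ν) 0 :=
    (Φ.hasFDerivAt.comp _ (hfd _).hasFDerivAt).comp_hasDerivAt 0 (hline 0)
  have hG' : HasDerivAt (D1g θ ν s a)
      ((Φ.comp (fderiv ℝ (fderiv ℝ F) (θ + (0 : ℝ) • ν))) ν) 0 := by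
    have heq : (fun t : ℝ => Φ (fderiv ℝ F (θ + t • ν))) = D1g θ ν s a := by
      funext t
      rw [hΦ, ContinuousLinearMap.apply_apply, hF1 t]
    rwa [heq] at hG
  have := hG'.unique (hasDerivAt_D1g θ ν s a 0)
  rw [h0] at this
  rw [← this, hΦ]
  simp [ContinuousLinearMap.apply_apply]

lemma sum_pf_eq_one (k : Fin N) : ∑ b, pf θ ν s k b 0 = 1 := pf_sum θ ν s k 0

lemma sum_abs_d1_nonneg (k : Fin N) : 0 ≤ ∑ b, |d1 θ ν s k b 0| :=
  Finset.sum_nonneg fun b _ => abs_nonneg _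

lemma prod_split2 {n m : Fin N} (hnm : m ≠ n) (F : Fin N → ℝ) :
    ∏ k, F k = F n * (F m * ∏ k ∈ (Finset.univ.erase n).erase m, F k) := by
  rw [← Finset.mul_prod_erase Finset.univ F (Finset.mem_univ n),
    ← Finset.mul_prod_erase _ F (Finset.mem_erase.mpr ⟨hnm, Finset.mem_univ m⟩)]

lemma prod_split1 (n : Fin N) (F : Fin N → ℝ) :
    ∏ k, F k = F n * ∏ k ∈ Finset.univ.erase n, F k :=
  (Finset.mul_prod_erase Finset.univ F (Finset.mem_univ n)).symm

lemma sum_term2_le {n m : Fin N} (hnm : m ≠ n) :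
    ∑ a : ∀ k, A k, (∏ k ∈ (Finset.univ.erase n).erase m, pf θ ν s k (a k) 0)
        * |d1 θ ν s m (a m) 0| * |d1 θ ν s n (a n) 0|
      ≤ (2 * Cn ν m) * (2 * Cn ν n) := by
  set h : ∀ k : Fin N, A k → ℝ :=
    fun k b => if k = n ∨ k = m then |d1 θ ν s k b 0| else pf θ ν s k b 0 with hh
  have hval : ∀ a : ∀ k, A k,
      (∏ k ∈ (Finset.univ.erase n).erase m, pf θ ν s k (a k) 0)
        * |d1 θ ν s m (a m) 0| * |d1 θ ν s n (a n) 0| = ∏ k, h k (a k) := by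
    intro a
    rw [prod_split2 hnm (fun k => h k (a k))]
    have hn : h n (a n) = |d1 θ ν s n (a n) 0| := if_pos (Or.inl rfl)
    have hm : h m (a m) = |d1 θ ν s m (a m) 0| := if_pos (Or.inr rfl)
    have hrest : ∏ k ∈ (Finset.univ.erase n).erase m, h k (a k)
        = ∏ k ∈ (Finset.univ.erase n).erase m, pf θ ν s k (a k) 0 := by
      refine Finset.prod_congr rfl fun k hk => ?_
      rw [Finset.mem_erase, Finset.mem_erase] at hk
      exact if_neg (by push_neg; exact ⟨hk.2.1, hk.1⟩)
    rw [hn, hm, hrest]; ring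
  calc ∑ a : ∀ k, A k, (∏ k ∈ (Finset.univ.erase n).erase m, pf θ ν s k (a k) 0)
        * |d1 θ ν s m (a m) 0| * |d1 θ ν s n (a n) 0|
      = ∑ a : ∀ k, A k, ∏ k, h k (a k) := Finset.sum_congr rfl fun a _ => hval a
    _ = ∏ k, ∑ b, h k b := (Fintype.prod_sum h).symm
    _ = (∑ b, |d1 θ ν s n b 0|) * ((∑ b, |d1 θ ν s m b 0|)
          * ∏ k ∈ (Finset.univ.erase n).erase m, ∑ b, pf θ ν s k b 0) := by
        rw [prod_split2 hnm (fun k => ∑ b, h k b)]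
        congr 1
        · refine Finset.sum_congr rfl fun b _ => if_pos (Or.inl rfl)
        congr 1
        · refine Finset.sum_congr rfl fun b _ => if_pos (Or.inr rfl)
        refine Finset.prod_congr rfl fun k hk => Finset.sum_congr rfl fun b _ => ?_
        rw [Finset.mem_erase, Finset.mem_erase] at hk
        exact if_neg (by push_neg; exact ⟨hk.2.1, hk.1⟩)
    _ ≤ (2 * Cn ν m) * (2 * Cn ν n) := by
        rw [Finset.prod_congr rfl fun k _ => sum_pf_eq_one θ ν s k, Finset.prod_const_one,
          mul_one]
        rw [mul_comm]
        exact mul_le_mul (sum_abs_d1_le θ ν s m 0) (sum_abs_d1_le θ ν s n 0)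
          (sum_abs_d1_nonneg θ ν s n) (mul_nonneg (by norm_num) (Cn_nonneg ν m))

lemma sum_term1_le (n : Fin N) :
    ∑ a : ∀ k, A k, (∏ m ∈ Finset.univ.erase n, pf θ ν s m (a m) 0)
        * |d2 θ ν s n (a n) 0|
      ≤ 2 * (Cn ν n) ^ 2 := by
  set h : ∀ k : Fin N, A k → ℝ :=
    fun k b => if k = n then |d2 θ ν s k b 0| else pf θ ν s k b 0 with hh
  have hval : ∀ a : ∀ k, A k,
      (∏ m ∈ Finset.univ.erase n, pf θ ν s m (a m) 0) * |d2 θ ν s n (a n) 0|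
        = ∏ k, h k (a k) := by
    intro a
    rw [prod_split1 n (fun k => h k (a k))]
    have hn : h n (a n) = |d2 θ ν s n (a n) 0| := if_pos rfl
    have hrest : ∏ k ∈ Finset.univ.erase n, h k (a k)
        = ∏ k ∈ Finset.univ.erase n, pf θ ν s k (a k) 0 := by
      refine Finset.prod_congr rfl fun k hk => ?_
      exact if_neg (Finset.mem_erase.mp hk).1
    rw [hn, hrest]; ring
  calc ∑ a : ∀ k, A k, (∏ m ∈ Finset.univ.erase n, pf θ ν s m (a m) 0)
        * |d2 θ ν s n (a n) 0|
      = ∑ a : ∀ k, A k, ∏ k, h k (a k) := Finset.sum_congr rfl fun a _ => hval a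
    _ = ∏ k, ∑ b, h k b := (Fintype.prod_sum h).symm
    _ = (∑ b, |d2 θ ν s n b 0|) * ∏ k ∈ Finset.univ.erase n, ∑ b, pf θ ν s k b 0 := by
        rw [prod_split1 n (fun k => ∑ b, h k b)]
        congr 1
        · exact Finset.sum_congr rfl fun b _ => if_pos rfl
        refine Finset.prod_congr rfl fun k hk => Finset.sum_congr rfl fun b _ => ?_
        exact if_neg (Finset.mem_erase.mp hk).1
    _ ≤ 2 * (Cn ν n) ^ 2 := by
        rw [Finset.prod_congr rfl fun k _ => sum_pf_eq_one θ ν s k, Finset.prod_const_one,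
          mul_one]
        exact sum_abs_d2_le θ ν s n 0

lemma abs_D2g_le :
    |D2g θ ν s a 0| ≤ ∑ n, ((∑ m ∈ Finset.univ.erase n,
        (∏ k ∈ (Finset.univ.erase n).erase m, pf θ ν s k (a k) 0) * |d1 θ ν s m (a m) 0|
          * |d1 θ ν s n (a n) 0|)
      + (∏ m ∈ Finset.univ.erase n, pf θ ν s m (a m) 0) * |d2 θ ν s n (a n) 0|) := by
  rw [D2g]
  refine (Finset.abs_sum_le_sum_abs _ _).trans (Finset.sum_le_sum fun n _ => ?_)
  refine (abs_add_le _ _).trans (add_le_add ?_ ?_)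
  · rw [abs_mul]
    have h1 : |∑ m ∈ Finset.univ.erase n,
        (∏ k ∈ (Finset.univ.erase n).erase m, pf θ ν s k (a k) 0) * d1 θ ν s m (a m) 0|
        ≤ ∑ m ∈ Finset.univ.erase n,
          (∏ k ∈ (Finset.univ.erase n).erase m, pf θ ν s k (a k) 0) * |d1 θ ν s m (a m) 0| := by
      refine (Finset.abs_sum_le_sum_abs _ _).trans (Finset.sum_le_sum fun m _ => ?_)
      rw [abs_mul, abs_of_nonneg (Finset.prod_nonneg fun k _ => pf_nonneg θ ν s k (a k) 0)]
    calc _ ≤ (∑ m ∈ Finset.univ.erase n,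
          (∏ k ∈ (Finset.univ.erase n).erase m, pf θ ν s k (a k) 0) * |d1 θ ν s m (a m) 0|)
            * |d1 θ ν s n (a n) 0| :=
          mul_le_mul_of_nonneg_right h1 (abs_nonneg _)
      _ = _ := Finset.sum_mul _ _ _
  · rw [abs_mul, abs_of_nonneg (Finset.prod_nonneg fun k _ => pf_nonneg θ ν s k (a k) 0)]

end SoftmaxAux

/-- Second-order bound for product softmax probabilities: the sum over
all global actions of the absolute second directional derivative of `θ ↦ π_θ(a|s)` in
direction `ν` is at most `6N²‖ν‖₂²`. -/
theorem softmax_second_order_bound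
    {N : ℕ} (hN : 1 ≤ N)
    {S A : Fin N → Type*}
    [∀ n, Fintype (S n)] [∀ n, Nonempty (S n)]
    [∀ n, Fintype (A n)] [∀ n, Nonempty (A n)]
    (θ ν : ∀ n, S n → A n → ℝ) (s : ∀ k, S k) :
    ∑ a : ∀ k, A k,
        |iteratedFDeriv ℝ 2 (fun θ' : ∀ n, S n → A n → ℝ => gPolicy θ' s a) θ ![ν, ν]|
      ≤ 6 * (N : ℝ) ^ 2 * sqNorm ν := by
  have hCsq : ∀ n, (Cn ν n) ^ 2 = ∑ x, ∑ b, (ν n x b) ^ 2 := fun n =>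
    Real.sq_sqrt (Finset.sum_nonneg fun x _ => Finset.sum_nonneg fun b _ => sq_nonneg _)
  have hsqN : ∑ n, (Cn ν n) ^ 2 = sqNorm ν := by
    rw [sqNorm]; exact Finset.sum_congr rfl fun n _ => hCsq n
  have hsq_nonneg : 0 ≤ sqNorm ν := by
    rw [← hsqN]; exact Finset.sum_nonneg fun n _ => sq_nonneg _
  calc ∑ a : ∀ k, A k,
        |iteratedFDeriv ℝ 2 (fun θ' : ∀ n, S n → A n → ℝ => gPolicy θ' s a) θ ![ν, ν]|
      = ∑ a : ∀ k, A k, |D2g θ ν s a 0| := by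
        exact Finset.sum_congr rfl fun a _ => by rw [second_deriv_eq θ ν s a]
    _ ≤ ∑ a : ∀ k, A k, ∑ n, ((∑ m ∈ Finset.univ.erase n,
          (∏ k ∈ (Finset.univ.erase n).erase m, pf θ ν s k (a k) 0) * |d1 θ ν s m (a m) 0|
            * |d1 θ ν s n (a n) 0|)
        + (∏ m ∈ Finset.univ.erase n, pf θ ν s m (a m) 0) * |d2 θ ν s n (a n) 0|) :=
        Finset.sum_le_sum fun a _ => abs_D2g_le θ ν s a
    _ = ∑ n, ((∑ m ∈ Finset.univ.erase n, ∑ a : ∀ k, A k,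
          (∏ k ∈ (Finset.univ.erase n).erase m, pf θ ν s k (a k) 0) * |d1 θ ν s m (a m) 0|
            * |d1 θ ν s n (a n) 0|)
        + ∑ a : ∀ k, A k,
          (∏ m ∈ Finset.univ.erase n, pf θ ν s m (a m) 0) * |d2 θ ν s n (a n) 0|) := by
        rw [Finset.sum_comm]
        refine Finset.sum_congr rfl fun n _ => ?_
        rw [Finset.sum_add_distrib, Finset.sum_comm]
    _ ≤ ∑ n, ((∑ m ∈ Finset.univ.erase n, (2 * Cn ν m) * (2 * Cn ν n))
        + 2 * (Cn ν n) ^ 2) := by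
        refine Finset.sum_le_sum fun n _ => add_le_add ?_ (sum_term1_le θ ν s n)
        refine Finset.sum_le_sum fun m hm => ?_
        exact sum_term2_le θ ν s (Finset.mem_erase.mp hm).1
    _ ≤ ∑ n, ((∑ m, (2 * Cn ν m) * (2 * Cn ν n)) + 2 * (Cn ν n) ^ 2) := by
        refine Finset.sum_le_sum fun n _ => add_le_add ?_ le_rfl
        refine Finset.sum_le_sum_of_subset_of_nonneg (Finset.subset_univ _) fun m _ _ => ?_
        exact mul_nonneg (mul_nonneg (by norm_num) (Cn_nonneg ν m))
          (mul_nonneg (by norm_num) (Cn_nonneg ν n))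
    _ = 4 * (∑ n, Cn ν n) ^ 2 + 2 * sqNorm ν := by
        rw [Finset.sum_add_distrib]
        congr 1
        · rw [sq, Finset.sum_mul_sum, Finset.mul_sum]
          refine Finset.sum_congr rfl fun n _ => ?_
          rw [Finset.mul_sum]
          exact Finset.sum_congr rfl fun m _ => by ring
        · rw [← hsqN, Finset.mul_sum]
    _ ≤ 4 * ((N : ℝ) * sqNorm ν) + 2 * sqNorm ν := by
        have hcs : (∑ n, Cn ν n) ^ 2 ≤ (N : ℝ) * sqNorm ν := by
          have h := Finset.sum_mul_sq_le_sq_mul_sq Finset.univ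
            (fun _ : Fin N => (1 : ℝ)) (fun n => Cn ν n)
          calc (∑ n, Cn ν n) ^ 2 = (∑ n, 1 * Cn ν n) ^ 2 := by simp
            _ ≤ (∑ _n : Fin N, (1 : ℝ) ^ 2) * ∑ n, (Cn ν n) ^ 2 := h
            _ = (N : ℝ) * sqNorm ν := by
                rw [hsqN]; simp [Finset.card_univ]
        nlinarith
    _ ≤ 6 * (N : ℝ) ^ 2 * sqNorm ν := by
        have hN' : (1 : ℝ) ≤ (N : ℝ) := by exact_mod_cast hN
        have hA : (N : ℝ) * sqNorm ν ≤ (N : ℝ) ^ 2 * sqNorm ν := by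
          refine mul_le_mul_of_nonneg_right ?_ hsq_nonneg
          nlinarith
        have hB : sqNorm ν ≤ (N : ℝ) ^ 2 * sqNorm ν := by
          refine le_trans ?_ hA
          refine le_trans ?_ (mul_le_mul_of_nonneg_right hN' hsq_nonneg)
          simp
        linarith
end

section
/- The log-softmax regularizer R(θ) = Σ_{n=1}^N (λ/(|S_n||A_n|))·Σ_{s_n∈S_n, a_n∈A_n} log π_{θ_n}(a_n|s_n) has gradient ∂R/∂θ_n(s_n,a_n) = (λ/|S_n|)·(1/|A_n| − π_{θ_n}(a_n|s_n)), and its Hessian quadratic form satisfies |⟨∇²R(θ) ν, ν⟩| ≤ Σ_{n=1}^N (2λ/|S_n|)·‖ν_n‖₂² for every direction ν = (ν_1,…,ν_N); in particular R is Σ_{n=1}^N 2λ/|S_n|-smooth. -/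
open Finset MeasureTheory
open scoped BigOperators Classical

namespace Stmt15Aux
set_option linter.unusedSectionVars false
set_option linter.unusedVariables false
noncomputable section


noncomputable section LSE

variable {α : Type*} [Fintype α] [Nonempty α] [DecidableEq α]

def Zf (x : α → ℝ) : ℝ := ∑ a, Real.exp (x a)
def smax (x : α → ℝ) (a : α) : ℝ := Real.exp (x a) / Zf x
def lse (x : α → ℝ) : ℝ := Real.log (Zf x)

lemma Zf_pos (x : α → ℝ) : 0 < Zf x :=
  Finset.sum_pos (fun a _ => Real.exp_pos _) univ_nonempty

lemma smax_nonneg (x : α → ℝ) (a : α) : 0 ≤ smax x a :=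
  div_nonneg (Real.exp_pos _).le (Zf_pos x).le

lemma smax_le_one (x : α → ℝ) (a : α) : smax x a ≤ 1 := by
  rw [smax, div_le_one (Zf_pos x)]
  exact Finset.single_le_sum (f := fun a => Real.exp (x a))
    (fun a _ => (Real.exp_pos _).le) (mem_univ a)

lemma sum_smax (x : α → ℝ) : ∑ a, smax x a = 1 := by
  simp only [smax, ← Finset.sum_div]
  exact div_self (Zf_pos x).ne'

def LSc (x : α → ℝ) : (α → ℝ) →L[ℝ] ℝ :=
  ∑ a, smax x a • ContinuousLinearMap.proj a

lemma LSc_apply (x v : α → ℝ) : LSc x v = ∑ a, smax x a * v a := by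
  simp [LSc]

lemma hasFDerivAt_Zf (x : α → ℝ) :
    HasFDerivAt Zf (∑ a, Real.exp (x a) • ContinuousLinearMap.proj (R := ℝ) (φ := fun _ : α => ℝ) a) x := by
  exact HasFDerivAt.fun_sum fun a _ =>
    ((ContinuousLinearMap.proj (R := ℝ) (φ := fun _ : α => ℝ) a).hasFDerivAt (x := x)).exp

lemma hasFDerivAt_lse (x : α → ℝ) : HasFDerivAt lse (LSc x) x := by
  have h := (hasFDerivAt_Zf x).log (Zf_pos x).ne'
  refine h.congr_fderiv ?_
  ext v
  simp only [LSc, smax, ContinuousLinearMap.sum_apply, ContinuousLinearMap.smul_apply,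
    ContinuousLinearMap.proj_apply, ContinuousLinearMap.coe_smul', Pi.smul_apply,
    smul_eq_mul]
  rw [Finset.mul_sum]
  exact Finset.sum_congr rfl fun a _ => by rw [div_mul_eq_mul_div, div_eq_inv_mul]

def dsm (x : α → ℝ) (a : α) : (α → ℝ) →L[ℝ] ℝ :=
  smax x a • (ContinuousLinearMap.proj a - LSc x)

lemma dsm_apply (x : α → ℝ) (a : α) (v : α → ℝ) :
    dsm x a v = smax x a * (v a - ∑ b, smax x b * v b) := by
  simp [dsm, LSc_apply]

lemma sum_smax_mul (x v : α → ℝ) :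
    ∑ b, smax x b * v b = (∑ b, Real.exp (x b) * v b) / Zf x := by
  simp only [smax]
  rw [Finset.sum_congr rfl fun b _ => div_mul_eq_mul_div (Real.exp (x b)) (Zf x) (v b), ← Finset.sum_div]

lemma hasFDerivAt_smax (x : α → ℝ) (a : α) :
    HasFDerivAt (fun y => smax y a) (dsm x a) x := by
  have hexp : HasFDerivAt (fun y : α → ℝ => Real.exp (y a))
      (Real.exp (x a) • ContinuousLinearMap.proj a) x :=
    ((ContinuousLinearMap.proj (R := ℝ) (φ := fun _ : α => ℝ) a).hasFDerivAt (x := x)).exp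
  have hinv : HasFDerivAt (fun y => (Zf y)⁻¹)
      ((-(Zf x ^ 2)⁻¹) • (∑ b, Real.exp (x b) • ContinuousLinearMap.proj (R := ℝ) (φ := fun _ : α => ℝ) b)) x :=
    (hasDerivAt_inv (Zf_pos x).ne').comp_hasFDerivAt x (hasFDerivAt_Zf x)
  have h := hexp.mul hinv
  have hfun : (fun y => smax y a) = fun y => Real.exp (y a) * (Zf y)⁻¹ := by
    funext y; rw [smax, div_eq_mul_inv]
  rw [hfun]
  refine h.congr_fderiv ?_
  ext v
  rw [dsm_apply, sum_smax_mul]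
  have hZ : Zf x ≠ 0 := (Zf_pos x).ne'
  simp only [smax, ContinuousLinearMap.add_apply, ContinuousLinearMap.smul_apply,
    ContinuousLinearMap.sum_apply, ContinuousLinearMap.proj_apply, smul_eq_mul]
  field_simp
  ring

def Msm (x : α → ℝ) : (α → ℝ) →L[ℝ] ((α → ℝ) →L[ℝ] ℝ) :=
  ∑ a, (dsm x a).smulRight (ContinuousLinearMap.proj a)

lemma hasFDerivAt_LSc (x : α → ℝ) : HasFDerivAt (fun y => LSc y) (Msm x) x := by
  have : (fun y : α → ℝ => LSc y)
      = fun y => ∑ a, smax y a • (ContinuousLinearMap.proj (R := ℝ) (φ := fun _ : α => ℝ) a) := rfl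
  rw [this]
  exact HasFDerivAt.fun_sum fun a _ => (hasFDerivAt_smax x a).smul_const (ContinuousLinearMap.proj (R := ℝ) (φ := fun _ : α => ℝ) a)

lemma Msm_apply (x u v : α → ℝ) :
    Msm x u v = ∑ a, smax x a * (u a - ∑ b, smax x b * u b) * v a := by
  simp [Msm, dsm_apply, ContinuousLinearMap.smulRight_apply]

lemma abs_Msm_le (x v : α → ℝ) : |Msm x v v| ≤ ∑ a, v a ^ 2 := by
  set m := ∑ b, smax x b * v b with hm
  have hval : Msm x v v = (∑ a, smax x a * v a ^ 2) - m ^ 2 := by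
    rw [Msm_apply, ← hm]
    have : ∀ a : α, smax x a * (v a - m) * v a
        = smax x a * v a ^ 2 - m * (smax x a * v a) := fun a => by ring
    rw [Finset.sum_congr rfl fun a _ => this a, Finset.sum_sub_distrib, ← Finset.mul_sum, ← hm]
    ring
  have h1 : ∑ a, smax x a * v a ^ 2 ≤ ∑ a, v a ^ 2 :=
    Finset.sum_le_sum fun a _ => by
      nlinarith [smax_le_one x a, smax_nonneg x a, sq_nonneg (v a)]
  have h2 : m ^ 2 ≤ ∑ a, smax x a * v a ^ 2 := by
    have hcs := Finset.sum_mul_sq_le_sq_mul_sq Finset.univ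
      (fun a => Real.sqrt (smax x a)) (fun a => Real.sqrt (smax x a) * v a)
    have he1 : ∀ a : α, Real.sqrt (smax x a) * (Real.sqrt (smax x a) * v a)
        = smax x a * v a := fun a => by
      rw [← mul_assoc, Real.mul_self_sqrt (smax_nonneg x a)]
    have he2 : ∀ a : α, Real.sqrt (smax x a) ^ 2 = smax x a := fun a =>
      Real.sq_sqrt (smax_nonneg x a)
    have he3 : ∀ a : α, (Real.sqrt (smax x a) * v a) ^ 2 = smax x a * v a ^ 2 := fun a => by
      rw [mul_pow, he2]
    rw [Finset.sum_congr rfl fun a _ => he1 a, Finset.sum_congr rfl fun a _ => he2 a,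
      Finset.sum_congr rfl fun a _ => he3 a, sum_smax, one_mul] at hcs
    exact hcs
  rw [hval, abs_of_nonneg (by linarith)]
  nlinarith [sq_nonneg m]

lemma lse_taylor (x v : α → ℝ) : |lse (x + v) - lse x - LSc x v| ≤ ∑ a, v a ^ 2 := by
  set φ : ℝ → ℝ := fun t => lse (x + t • v) with hφdef
  set φ' : ℝ → ℝ := fun t => LSc (x + t • v) v with hφ'def
  set C := ∑ a, v a ^ 2 with hC
  have hCnn : 0 ≤ C := Finset.sum_nonneg fun a _ => sq_nonneg _
  have hline : ∀ t : ℝ, HasDerivAt (fun t : ℝ => x + t • v) v t := fun t => by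
    simpa using ((hasDerivAt_id t).smul_const v).const_add x
  have hφ : ∀ t : ℝ, HasDerivAt φ (φ' t) t := fun t =>
    HasFDerivAt.comp_hasDerivAt (l := lse) t (hasFDerivAt_lse (x + t • v)) (hline t)
  have hφ' : ∀ t : ℝ, HasDerivAt φ' (Msm (x + t • v) v v) t := fun t => by
    have h1 : HasDerivAt (fun t : ℝ => LSc (x + t • v)) (Msm (x + t • v) v) t :=
      HasFDerivAt.comp_hasDerivAt (l := fun y => LSc y) t (hasFDerivAt_LSc (x + t • v)) (hline t)
    have h2 := ((ContinuousLinearMap.apply ℝ ℝ v).hasFDerivAt).comp_hasDerivAt t h1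
    exact h2
  have mvt1 : ∀ t ∈ Set.Icc (0:ℝ) 1, |φ' t - φ' 0| ≤ C * (t - 0) := by
    have := norm_image_sub_le_of_norm_deriv_le_segment'
      (f := φ') (f' := fun t => Msm (x + t • v) v v) (a := 0) (b := 1) (C := C)
      (fun u _ => (hφ' u).hasDerivWithinAt)
      (fun u _ => by simpa [Real.norm_eq_abs] using abs_Msm_le (x + u • v) v)
    intro t ht
    simpa [Real.norm_eq_abs] using this t ht
  have hψ : ∀ t : ℝ, HasDerivAt (fun t => φ t - t * φ' 0) (φ' t - φ' 0) t := fun t =>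
    (hφ t).sub (by simpa using (hasDerivAt_id t).mul_const (φ' 0))
  have mvt2 := norm_image_sub_le_of_norm_deriv_le_segment'
    (f := fun t => φ t - t * φ' 0) (f' := fun t => φ' t - φ' 0) (a := 0) (b := 1) (C := C)
    (fun u _ => (hψ u).hasDerivWithinAt)
    (fun u hu => by
      have h := mvt1 u ⟨hu.1, hu.2.le⟩
      have : C * (u - 0) ≤ C := by nlinarith [hu.1, hu.2.le]
      simpa [Real.norm_eq_abs] using le_trans h this)
    1 ⟨zero_le_one, le_refl 1⟩
  simp only [Real.norm_eq_abs, one_mul, zero_mul, sub_zero, mul_one] at mvt2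
  have e1 : φ 1 = lse (x + v) := by simp [hφdef]
  have e0 : φ 0 = lse x := by simp [hφdef]
  have e2 : φ' 0 = LSc x v := by simp [hφ'def]
  rw [e1, e0, e2] at mvt2
  have : lse (x + v) - lse x - LSc x v = lse (x + v) - LSc x v - lse x := by ring
  rw [this]
  exact mvt2

end LSE

noncomputable section Global

variable {N : ℕ} {S A : Fin N → Type*}
  [∀ n, Fintype (S n)] [∀ n, Nonempty (S n)] [∀ n, DecidableEq (S n)]
  [∀ n, Fintype (A n)] [∀ n, Nonempty (A n)] [∀ n, DecidableEq (A n)]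

def Pns (n : Fin N) (s : S n) : (∀ m, S m → A m → ℝ) →L[ℝ] (A n → ℝ) :=
  (ContinuousLinearMap.proj (R := ℝ) (φ := fun _ : S n => A n → ℝ) s).comp
    (ContinuousLinearMap.proj (R := ℝ) (φ := fun m : Fin N => S m → A m → ℝ) n)


def evE (n : Fin N) (s : S n) (a : A n) : (∀ m, S m → A m → ℝ) →L[ℝ] ℝ :=
  (ContinuousLinearMap.proj a).comp (Pns n s)

lemma hasFDerivAt_Pns (n : Fin N) (s : S n) (θ : ∀ m, S m → A m → ℝ) :
    HasFDerivAt (fun θ' : ∀ m, S m → A m → ℝ => θ' n s) (Pns n s) θ := by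
  have h := (Pns n s).hasFDerivAt (x := θ)
  exact h

lemma hasFDerivAt_evE (n : Fin N) (s : S n) (a : A n) (θ : ∀ m, S m → A m → ℝ) :
    HasFDerivAt (fun θ' : ∀ m, S m → A m → ℝ => θ' n s a) (evE n s a) θ := by
  have h := (evE n s a).hasFDerivAt (x := θ)
  exact h


def Dclm (lam : ℝ) (θ : ∀ m, S m → A m → ℝ) : (∀ m, S m → A m → ℝ) →L[ℝ] ℝ :=
  ∑ n, (lam / ((Fintype.card (S n) : ℝ) * (Fintype.card (A n) : ℝ))) •
    ∑ s, ((∑ a, evE n s a) - (Fintype.card (A n) : ℝ) • ((LSc (θ n s)).comp (Pns n s)))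

def Gfun (lam : ℝ) (θ : ∀ m, S m → A m → ℝ) : ℝ :=
  ∑ n, (lam / ((Fintype.card (S n) : ℝ) * (Fintype.card (A n) : ℝ))) *
    ∑ s, ((∑ a, θ n s a) - (Fintype.card (A n) : ℝ) * lse (θ n s))

lemma hasFDerivAt_G (lam : ℝ) (θ : ∀ m, S m → A m → ℝ) :
    HasFDerivAt (Gfun lam) (Dclm lam θ) θ := by
  apply HasFDerivAt.fun_sum
  intro n _
  apply HasFDerivAt.const_mul
  apply HasFDerivAt.fun_sum
  intro s _
  apply HasFDerivAt.sub
  · exact HasFDerivAt.fun_sum fun a _ => hasFDerivAt_evE n s a θ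
  · have h1 : HasFDerivAt (fun θ' : ∀ m, S m → A m → ℝ => lse (θ' n s))
        ((LSc (θ n s)).comp (Pns n s)) θ :=
      HasFDerivAt.comp (g := lse) θ (hasFDerivAt_lse (θ n s)) (hasFDerivAt_Pns n s θ)
    exact h1.const_mul _

lemma Dclm_apply (lam : ℝ) (θ w : ∀ m, S m → A m → ℝ) :
    Dclm lam θ w = ∑ n, (lam / ((Fintype.card (S n) : ℝ) * (Fintype.card (A n) : ℝ))) *
      ∑ s, ((∑ a, w n s a) - (Fintype.card (A n) : ℝ) * ∑ a, smax (θ n s) a * (w n s a)) := by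
  simp [Dclm, evE, Pns, LSc_apply]

def Hterm (θ : ∀ m, S m → A m → ℝ) (n : Fin N) (s : S n) :
    (∀ m, S m → A m → ℝ) →L[ℝ] ((∀ m, S m → A m → ℝ) →L[ℝ] ℝ) :=
  ((ContinuousLinearMap.compL ℝ (∀ m, S m → A m → ℝ) (A n → ℝ) ℝ).flip (Pns n s)).comp
    ((Msm (θ n s)).comp (Pns n s))

def Hclm (lam : ℝ) (θ : ∀ m, S m → A m → ℝ) :
    (∀ m, S m → A m → ℝ) →L[ℝ] ((∀ m, S m → A m → ℝ) →L[ℝ] ℝ) :=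
  ∑ n, (lam / ((Fintype.card (S n) : ℝ) * (Fintype.card (A n) : ℝ))) •
    ∑ s, -((Fintype.card (A n) : ℝ) • Hterm θ n s)

lemma hasFDerivAt_Dclm (lam : ℝ) (θ : ∀ m, S m → A m → ℝ) :
    HasFDerivAt (fun θ' => Dclm lam θ') (Hclm lam θ) θ := by
  apply HasFDerivAt.fun_sum
  intro n _
  refine HasFDerivAt.fun_const_smul (𝕜 := ℝ) (R := ℝ) (F := (∀ m, S m → A m → ℝ) →L[ℝ] ℝ) ?_ _
  apply HasFDerivAt.fun_sum
  intro s _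
  apply HasFDerivAt.const_sub
  refine HasFDerivAt.fun_const_smul (𝕜 := ℝ) (R := ℝ) (F := (∀ m, S m → A m → ℝ) →L[ℝ] ℝ) ?_ _
  have h1 : HasFDerivAt (fun θ' : ∀ m, S m → A m → ℝ => LSc (θ' n s))
      ((Msm (θ n s)).comp (Pns n s)) θ :=
    HasFDerivAt.comp (g := fun y => LSc y) θ (hasFDerivAt_LSc (θ n s)) (hasFDerivAt_Pns n s θ)
  have h2 := (((ContinuousLinearMap.compL ℝ (∀ m, S m → A m → ℝ) (A n → ℝ) ℝ).flip
      (Pns n s)).hasFDerivAt (x := LSc (θ n s))).comp θ h1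
  exact h2

lemma Hclm_apply (lam : ℝ) (θ ν : ∀ m, S m → A m → ℝ) :
    Hclm lam θ ν ν = ∑ n, (lam / ((Fintype.card (S n) : ℝ) * (Fintype.card (A n) : ℝ))) *
      ∑ s, -((Fintype.card (A n) : ℝ) * Msm (θ n s) (ν n s) (ν n s)) := by
  simp [Hclm, Hterm, Pns, ContinuousLinearMap.compL_apply, mul_comm]

lemma Dclm_single (lam : ℝ) (θ : ∀ m, S m → A m → ℝ) (n : Fin N) (sn : S n) (an : A n) :
    Dclm lam θ (Pi.single n (Pi.single sn (Pi.single an 1))) =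
      (lam / (Fintype.card (S n) : ℝ)) *
        (1 / (Fintype.card (A n) : ℝ) - smax (θ n sn) an) := by
  have hcA : ((Fintype.card (A n) : ℝ)) ≠ 0 := Nat.cast_ne_zero.mpr Fintype.card_ne_zero
  have hcS : ((Fintype.card (S n) : ℝ)) ≠ 0 := Nat.cast_ne_zero.mpr Fintype.card_ne_zero
  rw [Dclm_apply]
  rw [Finset.sum_eq_single n (fun n' _ hne => by
      simp [Pi.single_eq_of_ne hne]) (fun h => absurd (Finset.mem_univ n) h)]
  rw [Pi.single_eq_same]
  rw [Finset.sum_eq_single sn (fun s' _ hne => by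
      simp [Pi.single_eq_of_ne hne]) (fun h => absurd (Finset.mem_univ sn) h)]
  rw [Pi.single_eq_same]
  rw [Finset.sum_eq_single an (fun a' _ hne => by
      simp [Pi.single_eq_of_ne hne]) (fun h => absurd (Finset.mem_univ an) h),
    Pi.single_eq_same]
  rw [Finset.sum_eq_single an (fun a' _ hne => by
      simp [Pi.single_eq_of_ne hne]) (fun h => absurd (Finset.mem_univ an) h),
    Pi.single_eq_same]
  field_simp

lemma Hclm_bound (lam : ℝ) (hlam : 0 ≤ lam) (θ ν : ∀ m, S m → A m → ℝ) :
    |Hclm lam θ ν ν| ≤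
      ∑ n, (2 * lam / (Fintype.card (S n) : ℝ)) * ∑ s, ∑ a, (ν n s a) ^ 2 := by
  rw [Hclm_apply]
  refine (Finset.abs_sum_le_sum_abs _ _).trans (Finset.sum_le_sum fun n _ => ?_)
  have hcA : (0:ℝ) < Fintype.card (A n) := by exact_mod_cast Fintype.card_pos
  have hcS : (0:ℝ) < Fintype.card (S n) := by exact_mod_cast Fintype.card_pos
  have hX : (0:ℝ) ≤ ∑ s, ∑ a, (ν n s a) ^ 2 := by positivity
  rw [abs_mul, abs_of_nonneg (show (0:ℝ) ≤ lam / ((Fintype.card (S n) : ℝ) * (Fintype.card (A n) : ℝ)) by positivity)]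
  have h1 : |∑ s, -((Fintype.card (A n) : ℝ) * Msm (θ n s) (ν n s) (ν n s))|
      ≤ (Fintype.card (A n) : ℝ) * ∑ s, ∑ a, (ν n s a) ^ 2 := by
    refine (Finset.abs_sum_le_sum_abs _ _).trans ?_
    rw [Finset.mul_sum]
    refine Finset.sum_le_sum fun s _ => ?_
    rw [abs_neg, abs_mul, abs_of_nonneg hcA.le]
    exact mul_le_mul_of_nonneg_left (abs_Msm_le _ _) hcA.le
  refine (mul_le_mul_of_nonneg_left h1 (by positivity)).trans ?_
  have heq : lam / ((Fintype.card (S n) : ℝ) * (Fintype.card (A n) : ℝ)) *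
      ((Fintype.card (A n) : ℝ) * ∑ s, ∑ a, (ν n s a) ^ 2)
      = lam / (Fintype.card (S n) : ℝ) * ∑ s, ∑ a, (ν n s a) ^ 2 := by
    field_simp
  rw [heq]
  refine mul_le_mul_of_nonneg_right ?_ hX
  exact (div_le_div_iff_of_pos_right hcS).mpr (by linarith)

lemma G_key (lam : ℝ) (θ θ' : ∀ m, S m → A m → ℝ) :
    Gfun lam θ - Gfun lam θ' - Dclm lam θ (θ - θ') =
      ∑ n, (lam / ((Fintype.card (S n) : ℝ) * (Fintype.card (A n) : ℝ))) *
        ∑ s, ((Fintype.card (A n) : ℝ) *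
          (lse (θ' n s) - lse (θ n s) - LSc (θ n s) (θ' n s - θ n s))) := by
  rw [Dclm_apply]
  simp only [Gfun, Pi.sub_apply]
  rw [← Finset.sum_sub_distrib, ← Finset.sum_sub_distrib]
  refine Finset.sum_congr rfl fun n _ => ?_
  rw [← mul_sub, ← mul_sub]
  congr 1
  rw [← Finset.sum_sub_distrib, ← Finset.sum_sub_distrib]
  refine Finset.sum_congr rfl fun s _ => ?_
  have h2 : LSc (θ n s) (θ' n s - θ n s) = ∑ a, smax (θ n s) a * (θ' n s a - θ n s a) := by
    rw [LSc_apply]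
    exact Finset.sum_congr rfl fun a _ => by rw [Pi.sub_apply]
  have h3 : ∑ a, smax (θ n s) a * (θ n s a - θ' n s a)
      = -∑ a, smax (θ n s) a * (θ' n s a - θ n s a) := by
    rw [← Finset.sum_neg_distrib]
    exact Finset.sum_congr rfl fun a _ => by ring
  rw [h2, h3, Finset.sum_sub_distrib]
  ring

lemma G_taylor (lam : ℝ) (hlam : 0 ≤ lam) (θ θ' : ∀ m, S m → A m → ℝ) :
    |Gfun lam θ - Gfun lam θ' - Dclm lam θ (θ - θ')| ≤
      (∑ n, lam / (Fintype.card (S n) : ℝ)) * ∑ n, ∑ s, ∑ a, ((θ - θ') n s a) ^ 2 := by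
  rw [G_key]
  refine (Finset.abs_sum_le_sum_abs _ _).trans ?_
  rw [Finset.sum_mul]
  refine Finset.sum_le_sum fun n _ => ?_
  have hcA : (0:ℝ) < Fintype.card (A n) := by exact_mod_cast Fintype.card_pos
  have hcS : (0:ℝ) < Fintype.card (S n) := by exact_mod_cast Fintype.card_pos
  have hE : ∀ s : S n, |lse (θ' n s) - lse (θ n s) - LSc (θ n s) (θ' n s - θ n s)|
      ≤ ∑ a, ((θ - θ') n s a) ^ 2 := by
    intro s
    have h := lse_taylor (θ n s) (θ' n s - θ n s)
    have hx : θ n s + (θ' n s - θ n s) = θ' n s := by abel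
    rw [hx] at h
    refine h.trans (le_of_eq ?_)
    refine Finset.sum_congr rfl fun a _ => ?_
    simp only [Pi.sub_apply]
    ring
  have h1 : |∑ s, ((Fintype.card (A n) : ℝ) *
      (lse (θ' n s) - lse (θ n s) - LSc (θ n s) (θ' n s - θ n s)))|
      ≤ (Fintype.card (A n) : ℝ) * ∑ s, ∑ a, ((θ - θ') n s a) ^ 2 := by
    refine (Finset.abs_sum_le_sum_abs _ _).trans ?_
    rw [Finset.mul_sum]
    refine Finset.sum_le_sum fun s _ => ?_
    rw [abs_mul, abs_of_nonneg hcA.le]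
    exact mul_le_mul_of_nonneg_left (hE s) hcA.le
  rw [abs_mul, abs_of_nonneg (show (0:ℝ) ≤ lam / ((Fintype.card (S n) : ℝ) * (Fintype.card (A n) : ℝ)) by positivity)]
  refine (mul_le_mul_of_nonneg_left h1 (by positivity)).trans ?_
  have heq : lam / ((Fintype.card (S n) : ℝ) * (Fintype.card (A n) : ℝ)) *
      ((Fintype.card (A n) : ℝ) * ∑ s, ∑ a, ((θ - θ') n s a) ^ 2)
      = lam / (Fintype.card (S n) : ℝ) * ∑ s, ∑ a, ((θ - θ') n s a) ^ 2 := by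
    field_simp
  rw [heq]
  refine mul_le_mul_of_nonneg_left ?_ (by positivity)
  exact Finset.single_le_sum (f := fun m => ∑ s, ∑ a, ((θ - θ') m s a) ^ 2)
    (fun m _ => by positivity) (Finset.mem_univ n)

end Global


section Main

variable {N : ℕ} {S A : Fin N → Type*}
  [∀ n, Fintype (S n)] [∀ n, Nonempty (S n)] [∀ n, DecidableEq (S n)]
  [∀ n, Fintype (A n)] [∀ n, Nonempty (A n)] [∀ n, DecidableEq (A n)]

lemma Rreg_eq (lam : ℝ) (Rreg : (∀ n, S n → A n → ℝ) → ℝ)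
    (hRreg : Rreg = fun θ =>
      ∑ n, (lam / ((Fintype.card (S n) : ℝ) * (Fintype.card (A n) : ℝ))) *
        ∑ sn, ∑ an, Real.log (softmaxPol (θ n) sn an)) :
    Rreg = Gfun lam := by
  rw [hRreg]
  funext θ
  refine Finset.sum_congr rfl fun n _ => ?_
  congr 1
  refine Finset.sum_congr rfl fun s _ => ?_
  have hlog : ∀ a : A n, Real.log (softmaxPol (θ n) s a) = θ n s a - lse (θ n s) := by
    intro a
    rw [show softmaxPol (θ n) s a = Real.exp (θ n s a) / Zf (θ n s) from rfl,
      Real.log_div (Real.exp_ne_zero _) (Zf_pos _).ne', Real.log_exp]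
    rfl
  rw [Finset.sum_congr rfl fun a _ => hlog a, Finset.sum_sub_distrib, Finset.sum_const,
    Finset.card_univ, nsmul_eq_mul]

end Main
end
end Stmt15Aux

/-- The log-softmax regularizer
`R(θ) = Σ_n (λ/(|S_n||A_n|)) Σ_{s_n,a_n} log π_{θ_n}(a_n|s_n)` has partial derivatives
`∂R/∂θ_n(s_n,a_n) = (λ/|S_n|)(1/|A_n| − π_{θ_n}(a_n|s_n))`, its Hessian quadratic form
satisfies `|⟨∇²R(θ)ν, ν⟩| ≤ Σ_n (2λ/|S_n|)‖ν_n‖₂²`, and `R` is `Σ_n 2λ/|S_n|`-smooth. -/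
theorem regularizer_gradient_and_smoothness
    {N : ℕ} (hN : 1 ≤ N)
    {S A : Fin N → Type*}
    [∀ n, Fintype (S n)] [∀ n, Nonempty (S n)] [∀ n, DecidableEq (S n)]
    [∀ n, Fintype (A n)] [∀ n, Nonempty (A n)] [∀ n, DecidableEq (A n)]
    (lam : ℝ) (hlam : 0 < lam)
    (Rreg : (∀ n, S n → A n → ℝ) → ℝ)
    (hRreg : Rreg = fun θ =>
      ∑ n, (lam / ((Fintype.card (S n) : ℝ) * (Fintype.card (A n) : ℝ))) *
        ∑ sn, ∑ an, Real.log (softmaxPol (θ n) sn an))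
    (θ : ∀ n, S n → A n → ℝ) :
    (∀ (n : Fin N) (sn : S n) (an : A n),
      fderiv ℝ Rreg θ (Pi.single n (Pi.single sn (Pi.single an 1)))
        = (lam / (Fintype.card (S n) : ℝ)) *
            (1 / (Fintype.card (A n) : ℝ) - softmaxPol (θ n) sn an)) ∧
    (∀ ν : ∀ n, S n → A n → ℝ,
      |iteratedFDeriv ℝ 2 Rreg θ ![ν, ν]|
        ≤ ∑ n, (2 * lam / (Fintype.card (S n) : ℝ)) * ∑ sn, ∑ an, (ν n sn an) ^ 2) ∧
    (∀ θ' : ∀ n, S n → A n → ℝ,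
      |Rreg θ - Rreg θ' - fderiv ℝ Rreg θ (θ - θ')|
        ≤ (∑ n, lam / (Fintype.card (S n) : ℝ)) * sqNorm (θ - θ')) := by
  classical
  have hG : Rreg = Stmt15Aux.Gfun lam := Stmt15Aux.Rreg_eq lam Rreg hRreg
  have hfd : ∀ ψ : ∀ n, S n → A n → ℝ, HasFDerivAt Rreg (Stmt15Aux.Dclm lam ψ) ψ := by
    intro ψ
    rw [hG]
    exact Stmt15Aux.hasFDerivAt_G lam ψ
  refine ⟨?_, ?_, ?_⟩
  · intro n sn an
    rw [(hfd θ).fderiv, Stmt15Aux.Dclm_single]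
    rfl
  · intro ν
    have hfe : (fderiv ℝ Rreg) = fun ψ => Stmt15Aux.Dclm lam ψ :=
      funext fun ψ => (hfd ψ).fderiv
    rw [iteratedFDeriv_two_apply, hfe,
      show (![ν, ν] : Fin 2 → ∀ n, S n → A n → ℝ) 0 = ν from rfl,
      show (![ν, ν] : Fin 2 → ∀ n, S n → A n → ℝ) 1 = ν from rfl,
      (Stmt15Aux.hasFDerivAt_Dclm lam θ).fderiv]
    exact Stmt15Aux.Hclm_bound lam hlam.le θ ν
  · intro θ'
    rw [(hfd θ).fderiv, hG]
    simpa [sqNorm] using Stmt15Aux.G_taylor lam hlam.le θ θ'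
end

section
/- Entrywise softmax policy gradient formula: for the tabular softmax policy π_θ(a|s) = exp(θ(s,a))/Σ_{a'} exp(θ(s,a')) on a finite γ-discounted MDP and any initial distribution μ on S, the partial derivative of V^{π_θ}(μ) with respect to the coordinate θ(s,a) equals ∂V^{π_θ}(μ)/∂θ(s,a) = (1/(1−γ))·d_μ^{π_θ}(s)·π_θ(a|s)·A^{π_θ}(s,a). -/
open Finset MeasureTheory
open scoped BigOperators Classical

section PolicyGradientAux

open Matrix

attribute [local instance] Matrix.linftyOpNormedAddCommGroup Matrix.linftyOpSemiNormedRing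
  Matrix.linftyOpNormedRing Matrix.linftyOpNormedSpace Matrix.linftyOpNormedAlgebra

variable {S A : Type*} [Fintype S] [DecidableEq S] [Fintype A]

noncomputable def pgMat (P : S → A → S → ℝ) (p : S → A → ℝ) : Matrix S S ℝ :=
  Matrix.of fun s s' => ∑ a, p s a * P s a s'

noncomputable def pgRvec (r : S → A → ℝ) (p : S → A → ℝ) : S → ℝ :=
  fun s => ∑ a, p s a * r s a

noncomputable def pgW (γ : ℝ) (P : S → A → S → ℝ) (p : S → A → ℝ) : Matrix S S ℝ :=
  Ring.inverse (1 - γ • pgMat P p)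

noncomputable def entryL (s0 s1 : S) : Matrix S S ℝ →L[ℝ] ℝ :=
  LinearMap.toContinuousLinearMap
    { toFun := fun B => B s0 s1
      map_add' := fun _ _ => rfl
      map_smul' := fun _ _ => rfl }

lemma entryL_apply (s0 s1 : S) (B : Matrix S S ℝ) : entryL s0 s1 B = B s0 s1 := rfl

lemma pgMat_norm_lt {P : S → A → S → ℝ} (hP0 : ∀ s a s', 0 ≤ P s a s')
    (hP1 : ∀ s a, ∑ s', P s a s' = 1) {p : S → A → ℝ} (hp0 : ∀ s a, 0 ≤ p s a)
    (hp1 : ∀ s, ∑ a, p s a = 1) {γ : ℝ} (hγ0 : 0 < γ) (hγ1 : γ < 1) :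
    ‖γ • pgMat P p‖ < 1 := by
  rw [Matrix.linfty_opNorm_def]
  rw [show (1 : ℝ) = ((1 : NNReal) : ℝ) by simp, NNReal.coe_lt_coe]
  rw [Finset.sup_lt_iff (by norm_num : (⊥ : NNReal) < 1)]
  intro i _
  rw [← NNReal.coe_lt_coe]
  push_cast
  have h1 : ∀ j, ‖(γ • pgMat P p) i j‖ = γ * ∑ a, p i a * P i a j := by
    intro j
    have h2 : (0:ℝ) ≤ ∑ a, p i a * P i a j :=
      Finset.sum_nonneg fun a _ => mul_nonneg (hp0 i a) (hP0 i a j)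
    simp only [Matrix.smul_apply, smul_eq_mul, Real.norm_eq_abs, pgMat, Matrix.of_apply]
    rw [abs_of_nonneg (mul_nonneg hγ0.le h2)]
  calc ∑ j, ‖(γ • pgMat P p) i j‖ = γ * ∑ j, ∑ a, p i a * P i a j := by
        rw [Finset.mul_sum]; exact Finset.sum_congr rfl fun j _ => h1 j
    _ = γ := by
        rw [Finset.sum_comm]
        have : ∀ a ∈ Finset.univ, ∑ j, p i a * P i a j = p i a := by
          intro a _; rw [← Finset.mul_sum, hP1, mul_one]
        rw [Finset.sum_congr rfl this, hp1, mul_one]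
    _ < 1 := hγ1

lemma stateDist_eq_pgMat (P : S → A → S → ℝ) (p : S → A → ℝ) (ρ : S → ℝ) :
    ∀ t (s' : S), stateDist P p ρ t s' = ∑ s0, ρ s0 * (pgMat P p ^ t) s0 s' := by
  intro t
  induction t with
  | zero =>
    intro s'
    simp [stateDist, pow_zero, Matrix.one_apply]
  | succ t ih =>
    intro s'
    have step : stateDist P p ρ (t+1) s' = ∑ s1, stateDist P p ρ t s1 * pgMat P p s1 s' := by
      show (∑ s1, ∑ a, stateDist P p ρ t s1 * p s1 a * P s1 a s') = _
      refine Finset.sum_congr rfl fun s1 _ => ?_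
      rw [pgMat]; simp only [Matrix.of_apply]
      rw [Finset.mul_sum]
      exact Finset.sum_congr rfl fun a _ => by ring
    rw [step]
    have : ∀ s1, stateDist P p ρ t s1 * pgMat P p s1 s'
        = ∑ s0, ρ s0 * (pgMat P p ^ t) s0 s1 * pgMat P p s1 s' := by
      intro s1; rw [ih s1, Finset.sum_mul]
    rw [Finset.sum_congr rfl fun s1 _ => this s1, Finset.sum_comm]
    refine Finset.sum_congr rfl fun s0 _ => ?_
    rw [pow_succ, Matrix.mul_apply, Finset.mul_sum]
    exact Finset.sum_congr rfl fun s1 _ => by ring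

lemma pgW_hasSum {γ : ℝ} {P : S → A → S → ℝ} {p : S → A → ℝ}
    (h : ‖γ • pgMat P p‖ < 1) (s0 s1 : S) :
    HasSum (fun t : ℕ => γ ^ t * (pgMat P p ^ t) s0 s1) (pgW γ P p s0 s1) := by
  have h1 := (hasSum_geom_series_inverse (γ • pgMat P p) h).mapL (entryL s0 s1)
  have h2 : ∀ t : ℕ, entryL s0 s1 ((γ • pgMat P p) ^ t) = γ ^ t * (pgMat P p ^ t) s0 s1 := by
    intro t
    show ((γ • pgMat P p) ^ t) s0 s1 = _
    rw [smul_pow, Matrix.smul_apply, smul_eq_mul]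
  simpa only [h2, pgW, entryL_apply] using h1

lemma valueD_eq_pgW {γ : ℝ} {P : S → A → S → ℝ} {p : S → A → ℝ} (r : S → A → ℝ) (ρ : S → ℝ)
    (h : ‖γ • pgMat P p‖ < 1) :
    valueD γ P p r ρ = ∑ s0, ∑ s1, ρ s0 * pgW γ P p s0 s1 * pgRvec r p s1 := by
  have key : ∀ t : ℕ, γ ^ t * expReward P p r ρ t
      = ∑ s0, ∑ s1, ρ s0 * (γ ^ t * (pgMat P p ^ t) s0 s1) * pgRvec r p s1 := by
    intro t
    rw [expReward]
    have e1 : ∀ s1 : S, ∑ a, stateDist P p ρ t s1 * p s1 a * r s1 a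
        = stateDist P p ρ t s1 * pgRvec r p s1 := by
      intro s1
      rw [pgRvec, Finset.mul_sum]
      exact Finset.sum_congr rfl fun a _ => by ring
    rw [Finset.sum_congr rfl fun s1 _ => e1 s1]
    calc γ ^ t * ∑ s1, stateDist P p ρ t s1 * pgRvec r p s1
        = ∑ s1, ∑ s0, ρ s0 * (γ ^ t * (pgMat P p ^ t) s0 s1) * pgRvec r p s1 := by
          rw [Finset.mul_sum]
          refine Finset.sum_congr rfl fun s1 _ => ?_
          rw [stateDist_eq_pgMat, Finset.sum_mul, Finset.mul_sum]
          exact Finset.sum_congr rfl fun s0 _ => by ring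
      _ = _ := Finset.sum_comm
  have H : HasSum (fun t : ℕ => γ ^ t * expReward P p r ρ t)
      (∑ s0, ∑ s1, ρ s0 * pgW γ P p s0 s1 * pgRvec r p s1) := by
    simp only [key]
    exact hasSum_sum fun s0 _ => hasSum_sum fun s1 _ =>
      ((pgW_hasSum h s0 s1).mul_left (ρ s0)).mul_right _
  rw [valueD]
  exact H.tsum_eq

lemma occup_eq_pgW {γ : ℝ} {P : S → A → S → ℝ} {p : S → A → ℝ} (ρ : S → ℝ)
    (h : ‖γ • pgMat P p‖ < 1) (s : S) :
    occup γ P p ρ s = (1 - γ) * ∑ s0, ρ s0 * pgW γ P p s0 s := by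
  rw [occup]
  congr 1
  have key : ∀ t : ℕ, γ ^ t * stateDist P p ρ t s
      = ∑ s0, ρ s0 * (γ ^ t * (pgMat P p ^ t) s0 s) := by
    intro t
    rw [stateDist_eq_pgMat, Finset.mul_sum]
    exact Finset.sum_congr rfl fun s0 _ => by ring
  have H : HasSum (fun t : ℕ => γ ^ t * stateDist P p ρ t s)
      (∑ s0, ρ s0 * pgW γ P p s0 s) := by
    simp only [key]
    exact hasSum_sum fun s0 _ => (pgW_hasSum h s0 s).mul_left (ρ s0)
  exact H.tsum_eq

lemma valueV_eq_pgW {γ : ℝ} {P : S → A → S → ℝ} {p : S → A → ℝ} (r : S → A → ℝ)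
    (h : ‖γ • pgMat P p‖ < 1) (s' : S) :
    valueV γ P p r s' = ∑ s1, pgW γ P p s' s1 * pgRvec r p s1 := by
  rw [valueV, valueD_eq_pgW r _ h, Finset.sum_comm]
  rw [show (∑ s1 : S, pgW γ P p s' s1 * pgRvec r p s1)
      = ∑ s1 : S, ∑ s0 : S, (if s0 = s' then pgW γ P p s0 s1 * pgRvec r p s1 else 0) by
    refine Finset.sum_congr rfl fun s1 _ => ?_
    rw [Finset.sum_ite_eq' Finset.univ s' fun s0 => pgW γ P p s0 s1 * pgRvec r p s1]
    simp]
  refine Finset.sum_congr rfl fun s1 _ => Finset.sum_congr rfl fun s0 _ => ?_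
  rw [diracD]
  by_cases hs : s0 = s' <;> simp [hs]

lemma pgW_fixpoint {γ : ℝ} {P : S → A → S → ℝ} {p : S → A → ℝ}
    (h : ‖γ • pgMat P p‖ < 1) :
    pgW γ P p = 1 + γ • (pgMat P p * pgW γ P p) := by
  have hW : pgW γ P p = ((Units.oneSub (γ • pgMat P p) h)⁻¹ : (Matrix S S ℝ)ˣ) := by
    rw [pgW, ← Ring.inverse_unit (Units.oneSub (γ • pgMat P p) h), Units.val_oneSub]
  have hu : (1 - γ • pgMat P p) * pgW γ P p = 1 := by
    rw [hW]
    have := (Units.oneSub (γ • pgMat P p) h).mul_inv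
    rwa [Units.val_oneSub] at this
  have h2 : pgW γ P p - γ • (pgMat P p * pgW γ P p) = 1 := by
    rw [← hu, sub_mul, one_mul, smul_mul_assoc]
  linear_combination (norm := abel) h2

lemma valueV_bellman {γ : ℝ} {P : S → A → S → ℝ} {p : S → A → ℝ} (r : S → A → ℝ)
    (h : ‖γ • pgMat P p‖ < 1) (s' : S) :
    valueV γ P p r s' = ∑ a, p s' a * valueQ γ P p r s' a := by
  have e1 : ∀ s1, pgW γ P p s' s1
      = (1 : Matrix S S ℝ) s' s1 + γ * ∑ s2, pgMat P p s' s2 * pgW γ P p s2 s1 := by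
    intro s1
    conv_lhs => rw [pgW_fixpoint h]
    simp [Matrix.add_apply, Matrix.smul_apply, Matrix.mul_apply, smul_eq_mul]
  rw [valueV_eq_pgW r h s']
  calc ∑ s1, pgW γ P p s' s1 * pgRvec r p s1
      = ∑ s1, ((1 : Matrix S S ℝ) s' s1 * pgRvec r p s1
          + γ * ∑ s2, pgMat P p s' s2 * pgW γ P p s2 s1 * pgRvec r p s1) := by
        refine Finset.sum_congr rfl fun s1 _ => ?_
        rw [e1 s1, add_mul, Finset.mul_sum, Finset.sum_mul, Finset.mul_sum]
        congr 1
        exact Finset.sum_congr rfl fun s2 _ => by ring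
    _ = pgRvec r p s' + γ * ∑ s2, pgMat P p s' s2 * valueV γ P p r s2 := by
        rw [Finset.sum_add_distrib]
        congr 1
        · simp [Matrix.one_apply]
        · rw [← Finset.mul_sum, Finset.sum_comm]
          congr 1
          refine Finset.sum_congr rfl fun s2 _ => ?_
          rw [valueV_eq_pgW r h s2, Finset.mul_sum]
          exact Finset.sum_congr rfl fun s1 _ => by ring
    _ = ∑ a, p s' a * valueQ γ P p r s' a := by
        simp only [valueQ, pgRvec, pgMat, Matrix.of_apply]
        simp only [mul_add, Finset.mul_sum, Finset.sum_mul]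
        rw [Finset.sum_add_distrib]
        congr 1
        rw [Finset.sum_comm]
        exact Finset.sum_congr rfl fun a _ => Finset.sum_congr rfl fun s2 _ => by ring

lemma softmax_denom_pos (θ : S → A → ℝ) (s : S) [Nonempty A] :
    0 < ∑ a' : A, Real.exp (θ s a') :=
  Finset.sum_pos (fun a _ => Real.exp_pos _) Finset.univ_nonempty

lemma softmaxPol_nonneg (θ : S → A → ℝ) (s : S) (a : A) [Nonempty A] :
    0 ≤ softmaxPol θ s a :=
  div_nonneg (Real.exp_pos _).le (softmax_denom_pos θ s).le

lemma softmaxPol_sum_one (θ : S → A → ℝ) (s : S) [Nonempty A] :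
    ∑ a, softmaxPol θ s a = 1 := by
  rw [show (∑ a, softmaxPol θ s a)
      = (∑ a, Real.exp (θ s a)) / (∑ a', Real.exp (θ s a')) from (Finset.sum_div _ _ _).symm]
  exact div_self (softmax_denom_pos θ s).ne'

noncomputable def pgMatL (P : S → A → S → ℝ) : (S → A → ℝ) →L[ℝ] Matrix S S ℝ :=
  LinearMap.toContinuousLinearMap
    { toFun := fun p => pgMat P p
      map_add' := by
        intro x y; ext s s'
        simp [pgMat, add_mul, Finset.sum_add_distrib]
      map_smul' := by
        intro c x; ext s s'
        simp [pgMat, Finset.mul_sum, mul_assoc] }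

lemma pgMatL_apply (P : S → A → S → ℝ) (p : S → A → ℝ) : pgMatL P p = pgMat P p := rfl

noncomputable def pgRvecL (r : S → A → ℝ) : (S → A → ℝ) →L[ℝ] (S → ℝ) :=
  LinearMap.toContinuousLinearMap
    { toFun := fun p => pgRvec r p
      map_add' := by
        intro x y; funext s
        simp [pgRvec, add_mul, Finset.sum_add_distrib]
      map_smul' := by
        intro c x; funext s
        simp [pgRvec, Finset.mul_sum, mul_assoc] }

lemma pgRvecL_apply (r : S → A → ℝ) (p : S → A → ℝ) : pgRvecL r p = pgRvec r p := rfl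

lemma softmax_diff (θ : S → A → ℝ) (s' : S) (a' : A) [Nonempty A] :
    DifferentiableAt ℝ (fun θ' : S → A → ℝ => softmaxPol θ' s' a') θ := by
  have hev : ∀ b : A, DifferentiableAt ℝ (fun θ' : S → A → ℝ => θ' s' b) θ := by
    intro b
    exact ContinuousLinearMap.differentiableAt
      (((ContinuousLinearMap.proj b : (A → ℝ) →L[ℝ] ℝ).comp
        (ContinuousLinearMap.proj s' : (S → A → ℝ) →L[ℝ] (A → ℝ))))
  simp only [softmaxPol, div_eq_mul_inv]
  exact ((hev a').exp).mul
    ((DifferentiableAt.fun_sum fun b _ => (hev b).exp).inv (softmax_denom_pos θ s').ne')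

lemma softmax_line_hasDerivAt (θ e : S → A → ℝ) (s' : S) (a' : A) [Nonempty A] :
    HasDerivAt (fun t : ℝ => softmaxPol (θ + t • e) s' a')
      (softmaxPol θ s' a' * (e s' a' - ∑ b, e s' b * softmaxPol θ s' b)) 0 := by
  have key : ∀ b : A, HasDerivAt (fun t : ℝ => Real.exp ((θ + t • e) s' b))
      (e s' b * Real.exp (θ s' b)) 0 := by
    intro b
    have heq : (

fun t : ℝ => (θ + t • e) s' b) = fun t : ℝ => θ s' b + t * e s' b := by
      funext t; simp [smul_eq_mul]
    have h1 : HasDerivAt (fun t : ℝ => (θ + t • e) s' b) (e s' b) 0 := by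
      rw [heq]
      exact (hasDerivAt_mul_const (e s' b)).const_add (θ s' b)
    have h2 := h1.exp
    simpa [mul_comm] using h2
  have hnum := key a'
  have hden : HasDerivAt (fun t : ℝ => ∑ b, Real.exp ((θ + t • e) s' b))
      (∑ b, e s' b * Real.exp (θ s' b)) 0 := HasDerivAt.fun_sum fun b _ => key b
  have hden0 : (∑ b, Real.exp ((θ + (0:ℝ) • e) s' b)) ≠ 0 := by
    simpa using (softmax_denom_pos θ s').ne'
  have hq := hnum.fun_div hden hden0
  have hfun : (fun t : ℝ => Real.exp ((θ + t • e) s' a') / ∑ b, Real.exp ((θ + t • e) s' b))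
      = fun t : ℝ => softmaxPol (θ + t • e) s' a' := rfl
  rw [hfun] at hq
  convert hq using 1
  · rfl
  · rfl
  have hz := (softmax_denom_pos θ s').ne'
  simp only [zero_smul, add_zero]
  have hsum : (∑ b, e s' b * softmaxPol θ s' b)
      = (∑ b, e s' b * Real.exp (θ s' b)) / (∑ b, Real.exp (θ s' b)) := by
    rw [Finset.sum_div]
    exact Finset.sum_congr rfl fun b _ => by rw [softmaxPol, ← mul_div_assoc]
  rw [softmaxPol, hsum]
  field_simp

end PolicyGradientAux

attribute [local instance] Matrix.linftyOpNormedAddCommGroup Matrix.linftyOpSemiNormedRing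
  Matrix.linftyOpNormedRing Matrix.linftyOpNormedSpace Matrix.linftyOpNormedAlgebra

/-- Entrywise softmax policy gradient formula: for the tabular softmax
policy on a finite discounted MDP,
`∂V^{π_θ}(μ)/∂θ(s,a) = (1/(1−γ)) d_μ^{π_θ}(s) π_θ(a|s) A^{π_θ}(s,a)`. -/
theorem softmax_entrywise_policy_gradient
    {S A : Type*} [Fintype S] [Nonempty S] [DecidableEq S]
    [Fintype A] [Nonempty A] [DecidableEq A]
    (P : S → A → S → ℝ)
    (hP0 : ∀ s a s', 0 ≤ P s a s') (hP1 : ∀ s a, ∑ s', P s a s' = 1)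
    (r : S → A → ℝ) (hr0 : ∀ s a, 0 ≤ r s a) (hr1 : ∀ s a, r s a ≤ 1)
    (γ : ℝ) (hγ0 : 0 < γ) (hγ1 : γ < 1)
    (μ : S → ℝ) (hμ0 : ∀ s, 0 ≤ μ s) (hμ1 : ∑ s, μ s = 1)
    (θ : S → A → ℝ) (s : S) (a : A) :
    fderiv ℝ (fun θ' : S → A → ℝ => valueD γ P (softmaxPol θ') r μ) θ
        (Pi.single s (Pi.single a 1))
      = (1 / (1 - γ)) * occup γ P (softmaxPol θ) μ s * softmaxPol θ s a *
          (valueQ γ P (softmaxPol θ) r s a - valueV γ P (softmaxPol θ) r s) := by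
  have hnormθ : ‖γ • pgMat P (softmaxPol θ)‖ < 1 :=
    pgMat_norm_lt hP0 hP1 (fun s' a' => softmaxPol_nonneg θ s' a')
      (fun s' => softmaxPol_sum_one θ s') hγ0 hγ1
  have hfun : (fun θ' : S → A → ℝ => valueD γ P (softmaxPol θ') r μ)
      = fun θ' : S → A → ℝ => ∑ s0, ∑ s1,
          μ s0 * pgW γ P (softmaxPol θ') s0 s1 * pgRvec r (softmaxPol θ') s1 := by
    funext θ'
    exact valueD_eq_pgW r μ
      (pgMat_norm_lt hP0 hP1 (fun s' a' => softmaxPol_nonneg θ' s' a')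
        (fun s' => softmaxPol_sum_one θ' s') hγ0 hγ1)
  rw [hfun]
  set e : S → A → ℝ := Pi.single s (Pi.single a 1) with he
  set dp : S → A → ℝ :=
    fun s' a' => softmaxPol θ s' a' * (e s' a' - ∑ b, e s' b * softmaxPol θ s' b) with hdp
  have h0e : θ + (0:ℝ) • e = θ := by simp
  -- differentiability at θ
  have hsmD : DifferentiableAt ℝ (fun θ' : S → A → ℝ => softmaxPol θ') θ :=
    differentiableAt_pi.2 fun s' => differentiableAt_pi.2 fun a' => softmax_diff θ s' a'
  have hMD : DifferentiableAt ℝ (fun θ' : S → A → ℝ => pgMat P (softmaxPol θ')) θ := by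
    have h1 := ((pgMatL P).differentiableAt).comp θ hsmD
    exact h1
  have hID : DifferentiableAt ℝ (fun θ' : S → A → ℝ => 1 - γ • pgMat P (softmaxPol θ')) θ :=
    (hMD.const_smul γ).const_sub 1
  have hWD : DifferentiableAt ℝ (fun θ' : S → A → ℝ => pgW γ P (softmaxPol θ')) θ := by
    have hu : IsUnit (1 - γ • pgMat P (softmaxPol θ)) := isUnit_one_sub_of_norm_lt_one hnormθ
    have h2 := (differentiableAt_inverse (𝕜 := ℝ) hu).comp θ hID
    exact h2
  have hFD : DifferentiableAt ℝ (fun θ' : S → A → ℝ => ∑ s0, ∑ s1,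
      μ s0 * pgW γ P (softmaxPol θ') s0 s1 * pgRvec r (softmaxPol θ') s1) θ := by
    refine DifferentiableAt.fun_sum fun s0 _ => DifferentiableAt.fun_sum fun s1 _ =>
      DifferentiableAt.mul ?_ ?_
    · refine (differentiableAt_const (μ s0)).mul ?_
      have h3 := ((entryL s0 s1).differentiableAt).comp θ hWD
      simpa [Function.comp_def, entryL_apply] using h3
    · have h4 := (((ContinuousLinearMap.proj s1 : (S → ℝ) →L[ℝ] ℝ).comp
        (pgRvecL r)).differentiableAt).comp θ hsmD
      simpa [Function.comp_def, pgRvecL_apply] using h4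
  -- the line through θ in direction e
  have hline : HasDerivAt (fun t : ℝ => θ + t • e) e 0 := by
    simpa using ((hasDerivAt_id (0:ℝ)).smul_const e).const_add θ
  have hcomp : HasDerivAt (fun t : ℝ => ∑ s0, ∑ s1,
      μ s0 * pgW γ P (softmaxPol (θ + t • e)) s0 s1 * pgRvec r (softmaxPol (θ + t • e)) s1)
      (fderiv ℝ (fun θ' : S → A → ℝ => ∑ s0, ∑ s1,
        μ s0 * pgW γ P (softmaxPol θ') s0 s1 * pgRvec r (softmaxPol θ') s1) θ e) 0 := by
    have h5 := hFD.hasFDerivAt.comp_hasDerivAt_of_eq 0 hline (by simp)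
    simpa [Function.comp_def] using h5
  -- derivative along the line, computed explicitly
  have hpath : HasDerivAt (fun t : ℝ => softmaxPol (θ + t • e)) dp 0 := by
    refine hasDerivAt_pi.2 fun s' => hasDerivAt_pi.2 fun a' => ?_
    simpa only [hdp] using softmax_line_hasDerivAt θ e s' a'
  have hMpath : HasDerivAt (fun t : ℝ => pgMat P (softmaxPol (θ + t • e))) (pgMat P dp) 0 := by
    have h1 := (pgMatL P).hasFDerivAt.comp_hasDerivAt 0 hpath
    exact h1
  have hIpath : HasDerivAt (fun t : ℝ => 1 - γ • pgMat P (softmaxPol (θ + t • e)))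
      (-(γ • pgMat P dp)) 0 := (hMpath.const_smul γ).const_sub 1
  have hWu : (↑(Units.oneSub (γ • pgMat P (softmaxPol θ)) hnormθ)⁻¹ : Matrix S S ℝ)
      = pgW γ P (softmaxPol θ) := by
    rw [pgW, ← Ring.inverse_unit (Units.oneSub (γ • pgMat P (softmaxPol θ)) hnormθ),
      Units.val_oneSub]
  have hWpath : HasDerivAt (fun t : ℝ => pgW γ P (softmaxPol (θ + t • e)))
      (pgW γ P (softmaxPol θ) * (γ • pgMat P dp) * pgW γ P (softmaxPol θ)) 0 := by
    have hufd : HasFDerivAt (Ring.inverse : Matrix S S ℝ → Matrix S S ℝ)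
        (-(ContinuousLinearMap.mulLeftRight ℝ (Matrix S S ℝ)
          (↑(Units.oneSub (γ • pgMat P (softmaxPol θ)) hnormθ)⁻¹)
          (↑(Units.oneSub (γ • pgMat P (softmaxPol θ)) hnormθ)⁻¹)))
        (1 - γ • pgMat P (softmaxPol θ)) := by
      have h6 := hasFDerivAt_ringInverse (𝕜 := ℝ)
        (Units.oneSub (γ • pgMat P (softmaxPol θ)) hnormθ)
      rwa [Units.val_oneSub] at h6
    have h7 := hufd.comp_hasDerivAt_of_eq 0 hIpath (by simp)
    simp only [Function.comp, ContinuousLinearMap.neg_apply,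
      ContinuousLinearMap.mulLeftRight_apply, hWu, mul_neg, neg_mul, neg_neg] at h7
    exact h7
  have hWentry : ∀ s0 s1 : S, HasDerivAt
      (fun t : ℝ => pgW γ P (softmaxPol (θ + t • e)) s0 s1)
      ((pgW γ P (softmaxPol θ) * (γ • pgMat P dp) * pgW γ P (softmaxPol θ)) s0 s1) 0 := by
    intro s0 s1
    have h3 := (entryL s0 s1).hasFDerivAt.comp_hasDerivAt 0 hWpath
    exact h3
  have hRentry : ∀ s1 : S, HasDerivAt
      (fun t : ℝ => pgRvec r (softmaxPol (θ + t • e)) s1) (pgRvec r dp s1) 0 := by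
    intro s1
    have h4 := ((ContinuousLinearMap.proj s1 : (S → ℝ) →L[ℝ] ℝ).comp
      (pgRvecL r)).hasFDerivAt.comp_hasDerivAt 0 hpath
    simpa [Function.comp_def, pgRvecL_apply] using h4
  have hGline : HasDerivAt (fun t : ℝ => ∑ s0, ∑ s1,
      μ s0 * pgW γ P (softmaxPol (θ + t • e)) s0 s1 * pgRvec r (softmaxPol (θ + t • e)) s1)
      (∑ s0, ∑ s1,
        (μ s0 * (pgW γ P (softmaxPol θ) * (γ • pgMat P dp) * pgW γ P (softmaxPol θ)) s0 s1
            * pgRvec r (softmaxPol θ) s1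
          + μ s0 * pgW γ P (softmaxPol θ) s0 s1 * pgRvec r dp s1)) 0 := by
    refine HasDerivAt.fun_sum fun s0 _ => HasDerivAt.fun_sum fun s1 _ => ?_
    have hterm := ((hWentry s0 s1).const_mul (μ s0)).mul (hRentry s1)
    rw [h0e] at hterm
    exact hterm
  have hval := hcomp.unique hGline
  rw [hval]
  -- now pure algebra
  have hdp0 : ∀ s' : S, s' ≠ s → ∀ a' : A, dp s' a' = 0 := by
    intro s' hs a'
    have hz : e s' = 0 := by rw [he]; exact Pi.single_eq_of_ne hs _
    simp [hdp, hz]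
  have hdpa : ∀ a' : A, dp s a'
      = softmaxPol θ s a' * ((if a' = a then (1:ℝ) else 0) - softmaxPol θ s a) := by
    intro a'
    have hz : ∀ b : A, e s b = if b = a then (1:ℝ) else 0 := by
      intro b
      rw [he, Pi.single_eq_same, Pi.single_apply]
    simp only [hdp, hz, ite_mul, one_mul, zero_mul, Finset.sum_ite_eq', Finset.mem_univ,
      if_true]
  have hDM0 : ∀ s2 s3 : S, s2 ≠ s → pgMat P dp s2 s3 = 0 := by
    intro s2 s3 hne
    show (∑ a', dp s2 a' * P s2 a' s3) = 0
    exact Finset.sum_eq_zero fun a' _ => by rw [hdp0 s2 hne a', zero_mul]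
  have hdRv0 : ∀ s1 : S, s1 ≠ s → pgRvec r dp s1 = 0 := by
    intro s1 hne
    show (∑ a', dp s1 a' * r s1 a') = 0
    exact Finset.sum_eq_zero fun a' _ => by rw [hdp0 s1 hne a', zero_mul]
  have hWDW : ∀ s0 s1 : S,
      (pgW γ P (softmaxPol θ) * (γ • pgMat P dp) * pgW γ P (softmaxPol θ)) s0 s1
      = ∑ s3, pgW γ P (softmaxPol θ) s0 s * (γ * pgMat P dp s s3)
          * pgW γ P (softmaxPol θ) s3 s1 := by
    intro s0 s1
    rw [Matrix.mul_apply]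
    refine Finset.sum_congr rfl fun s3 _ => ?_
    congr 1
    rw [Matrix.mul_apply]
    rw [Finset.sum_eq_single s (fun s2 _ hne => by
        rw [Matrix.smul_apply, hDM0 s2 s3 hne]; simp)
      (fun h => absurd (Finset.mem_univ s) h)]
    rw [Matrix.smul_apply, smul_eq_mul]
  have key1 : ∀ s0 : S, (∑ s1,
      μ s0 * (pgW γ P (softmaxPol θ) * (γ • pgMat P dp) * pgW γ P (softmaxPol θ)) s0 s1
        * pgRvec r (softmaxPol θ) s1)
      = μ s0 * (pgW γ P (softmaxPol θ) s0 s
          * (γ * ∑ s3, pgMat P dp s s3 * valueV γ P (softmaxPol θ) r s3)) := by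
    intro s0
    have h1 : ∀ s1, μ s0 * (pgW γ P (softmaxPol θ) * (γ • pgMat P dp)
          * pgW γ P (softmaxPol θ)) s0 s1 * pgRvec r (softmaxPol θ) s1
        = ∑ s3, μ s0 * (pgW γ P (softmaxPol θ) s0 s * (γ * pgMat P dp s s3))
            * (pgW γ P (softmaxPol θ) s3 s1 * pgRvec r (softmaxPol θ) s1) := by
      intro s1
      rw [hWDW s0 s1, Finset.mul_sum, Finset.sum_mul]
      exact Finset.sum_congr rfl fun s3 _ => by ring
    rw [Finset.sum_congr rfl fun s1 _ => h1 s1, Finset.sum_comm]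
    have h2 : ∀ s3, (∑ s1, μ s0 * (pgW γ P (softmaxPol θ) s0 s * (γ * pgMat P dp s s3))
          * (pgW γ P (softmaxPol θ) s3 s1 * pgRvec r (softmaxPol θ) s1))
        = μ s0 * (pgW γ P (softmaxPol θ) s0 s
            * (γ * (pgMat P dp s s3 * valueV γ P (softmaxPol θ) r s3))) := by
      intro s3
      rw [← Finset.mul_sum, valueV_eq_pgW r hnormθ s3]
      ring
    rw [Finset.sum_congr rfl fun s3 _ => h2 s3, ← Finset.mul_sum]
    congr 1
    rw [← Finset.mul_sum]
    congr 1
    rw [← Finset.mul_sum]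
  have key2 : ∀ s0 : S, (∑ s1, μ s0 * pgW γ P (softmaxPol θ) s0 s1 * pgRvec r dp s1)
      = μ s0 * (pgW γ P (softmaxPol θ) s0 s * pgRvec r dp s) := by
    intro s0
    rw [Finset.sum_eq_single s (fun s1 _ hne => by rw [hdRv0 s1 hne, mul_zero])
      (fun h => absurd (Finset.mem_univ s) h)]
    ring
  have hX : (γ * ∑ s3, pgMat P dp s s3 * valueV γ P (softmaxPol θ) r s3) + pgRvec r dp s
      = ∑ a', dp s a' * valueQ γ P (softmaxPol θ) r s a' := by
    simp only [valueQ, pgMat, pgRvec, Matrix.of_apply]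
    simp only [mul_add, Finset.mul_sum, Finset.sum_mul]
    rw [Finset.sum_add_distrib, add_comm]
    congr 1
    rw [Finset.sum_comm]
    exact Finset.sum_congr rfl fun a' _ => Finset.sum_congr rfl fun s3 _ => by ring
  have hQ : (∑ a', dp s a' * valueQ γ P (softmaxPol θ) r s a')
      = softmaxPol θ s a * (valueQ γ P (softmaxPol θ) r s a
          - valueV γ P (softmaxPol θ) r s) := by
    rw [valueV_bellman r hnormθ s]
    have hterm : ∀ a', dp s a' * valueQ γ P (softmaxPol θ) r s a'
        = (if a' = a then softmaxPol θ s a' * valueQ γ P (softmaxPol θ) r s a' else 0)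
          - softmaxPol θ s a * (softmaxPol θ s a' * valueQ γ P (softmaxPol θ) r s a') := by
      intro a'
      rw [hdpa a']
      by_cases hA : a' = a
      · simp [hA]; ring
      · simp [hA]; ring
    rw [Finset.sum_congr rfl fun a' _ => hterm a', Finset.sum_sub_distrib]
    rw [Finset.sum_ite_eq' Finset.univ a
      fun a' => softmaxPol θ s a' * valueQ γ P (softmaxPol θ) r s a']
    rw [← Finset.mul_sum]
    simp [mul_sub]
  have hsplit : ∀ s0 : S, (∑ s1,
      (μ s0 * (pgW γ P (softmaxPol θ) * (γ • pgMat P dp) * pgW γ P (softmaxPol θ)) s0 s1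
          * pgRvec r (softmaxPol θ) s1
        + μ s0 * pgW γ P (softmaxPol θ) s0 s1 * pgRvec r dp s1))
      = μ s0 * pgW γ P (softmaxPol θ) s0 s
          * (softmaxPol θ s a * (valueQ γ P (softmaxPol θ) r s a
              - valueV γ P (softmaxPol θ) r s)) := by
    intro s0
    rw [Finset.sum_add_distrib, key1 s0, key2 s0, ← hQ, ← hX]
    ring
  rw [Finset.sum_congr rfl fun s0 _ => hsplit s0, ← Finset.sum_mul,
    occup_eq_pgW μ hnormθ s]
  have hγne : (1:ℝ) - γ ≠ 0 := by linarith
  field_simp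
end
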